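/- arXiv:1206.3539 — 9 statements merged into one kernel-verified Lean document; each statement's English description precedes it below -/
import Mathlib

section
/- Let Y be a Banach space and X a closed subspace that is an ideal in Y. Then there exists a Hahn-Banach extension operator φ : X* → Y* such that for every ε > 0, every finite-dimensional subspace E ⊆ Y and every finite-dimensional subspace F ⊆ X* there exists a linear map T : E → X satisfying (i) Te = e for all e ∈ X ∩ E, (ii) ‖Te‖ ≤ (1+ε)‖e‖ for all e ∈ E, and (iii) (φ f*)(e) = f*(Te) for all e ∈ E and all f* ∈ F. -/
universe u v

open Metric Set

section Defs

variable {Y : Type*} [NormedAddCommGroup Y] [NormedSpace ℝ Y]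

/-- `X` is an ideal in `Y`. -/
def IsIdeal (X : Subspace ℝ Y) : Prop :=
  ∀ ε : ℝ, 0 < ε → ∀ E : Subspace ℝ Y, FiniteDimensional ℝ E →
    ∃ T : E →ₗ[ℝ] X,
      (∀ e : E, (e : Y) ∈ X → ((T e : X) : Y) = (e : Y)) ∧
      (∀ e : E, ‖T e‖ ≤ (1 + ε) * ‖e‖)

/-- `X` is a super-ideal in `Y`. -/
def IsSuperIdeal (X : Subspace ℝ Y) : Prop :=
  ∀ ε : ℝ, 0 < ε → ∀ E : Subspace ℝ Y, FiniteDimensional ℝ E →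
    ∃ T : E →ₗ[ℝ] X,
      (∀ e : E, (e : Y) ∈ X → ((T e : X) : Y) = (e : Y)) ∧
      (∀ e : E, (1 + ε)⁻¹ * ‖e‖ ≤ ‖T e‖ ∧ ‖T e‖ ≤ (1 + ε) * ‖e‖)

/-- `X` is a super u-ideal in `Y`. -/
def IsSuperUIdeal (X : Subspace ℝ Y) : Prop :=
  ∀ ε : ℝ, 0 < ε → ∀ E : Subspace ℝ Y, FiniteDimensional ℝ E →
    ∃ T : E →ₗ[ℝ] X,
      (∀ e : E, (e : Y) ∈ X → ((T e : X) : Y) = (e : Y)) ∧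
      (∀ e : E, (1 + ε)⁻¹ * ‖e‖ ≤ ‖T e‖ ∧ ‖T e‖ ≤ (1 + ε) * ‖e‖) ∧
      (∀ e : E, ‖(e : Y) - (2 : ℝ) • ((T e : X) : Y)‖ ≤ (1 + ε) * ‖e‖)

/-- `φ : X* → Y*` is a Hahn-Banach extension operator. -/
def IsHahnBanachExtensionOperator (X : Subspace ℝ Y)
    (φ : (X →L[ℝ] ℝ) →L[ℝ] (Y →L[ℝ] ℝ)) : Prop :=
  ∀ f : X →L[ℝ] ℝ, (∀ x : X, φ f (x : Y) = f x) ∧ ‖φ f‖ = ‖f‖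

/-- A set of functionals `V ⊆ Y*` is 1-norming for `Y`. -/
def IsOneNorming (V : Set (Y →L[ℝ] ℝ)) : Prop :=
  ∀ y : Y, ‖y‖ = sSup {r : ℝ | ∃ v ∈ V, ‖v‖ ≤ 1 ∧ r = |v y|}

end Defs

section Props

variable (Z : Type*) [NormedAddCommGroup Z] [NormedSpace ℝ Z]

/-- A slice of the closed unit ball of `Z`. -/
def IsSlice (S : Set Z) : Prop :=
  ∃ (f : Z →L[ℝ] ℝ) (ε : ℝ), ‖f‖ = 1 ∧ 0 < ε ∧
    S = {z | z ∈ closedBall (0 : Z) 1 ∧ 1 - ε < f z}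

/-- The local diameter 2 property. -/
def HasLocalDiameterTwoProperty : Prop :=
  ∀ S : Set Z, IsSlice Z S → Metric.diam S = 2

/-- The diameter 2 property. -/
def HasDiameterTwoProperty : Prop :=
  ∀ U : Set Z, U.Nonempty →
    (∃ V : Set Z, @IsOpen (WeakSpace ℝ Z) _ V ∧ U = V ∩ closedBall (0 : Z) 1) →
    Metric.diam U = 2

/-- The strong diameter 2 property. -/
def HasStrongDiameterTwoProperty : Prop :=
  ∀ (n : ℕ), 0 < n → ∀ (S : Fin n → Set Z) (lam : Fin n → ℝ),
    (∀ i, IsSlice Z (S i)) → (∀ i, 0 ≤ lam i) → (∑ i, lam i) = 1 →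
    Metric.diam {z : Z | ∃ x : Fin n → Z, (∀ i, x i ∈ S i) ∧ z = ∑ i, lam i • x i} = 2

/-- The Daugavet property. -/
def HasDaugavetProperty : Prop :=
  ∀ T : Z →L[ℝ] Z, Module.finrank ℝ (LinearMap.range (T : Z →ₗ[ℝ] Z)) = 1 →
    ‖ContinuousLinearMap.id ℝ Z + T‖ = 1 + ‖T‖

end Props

/-- `X` is a Gurariĭ space. -/
def IsGurarii (X : Type*) [NormedAddCommGroup X] [NormedSpace ℝ X] : Prop :=
  ∀ ε : ℝ, 0 < ε →
    ∀ (F : Type) [NormedAddCommGroup F] [NormedSpace ℝ F] [FiniteDimensional ℝ F],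
      ∀ (E : Subspace ℝ F) (TE : E →ₗᵢ[ℝ] X),
        ∃ TF : F →ₗ[ℝ] X,
          (∀ e : E, TF (e : F) = TE e) ∧
          (∀ f : F, (1 + ε)⁻¹ * ‖f‖ ≤ ‖TF f‖ ∧ ‖TF f‖ ≤ (1 + ε) * ‖f‖)

/-- `X` is a Lindenstrauss space: its dual is isometric to some `L¹(μ)`. -/
def IsLindenstrauss (X : Type u) [NormedAddCommGroup X] [NormedSpace ℝ X] : Prop :=
  ∃ (α : Type u) (m : MeasurableSpace α) (μ : @MeasureTheory.Measure α m),
    Nonempty ((X →L[ℝ] ℝ) ≃ₗᵢ[ℝ] MeasureTheory.Lp ℝ 1 μ)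

/-!
Index finite-dimensional subspaces of `Y` together with tolerances `1 / (n + 1)`, and use the ideal
property to choose linear maps `P i : Y → X` that fix `X` and are almost isometric on the `i`-th
subspace. Along an ultrafilter finer than `atTop`, `f (P i y)` converges for all `f ∈ X*`, `y ∈ Y`;
the limit `φ f y` is bilinear, bounded by `‖f‖ ‖y‖` and extends `f`, so `φ` is a Hahn-Banach
extension operator. Given `ε`, `E` and `F`, some `P i` is `(1 + ε/2)`-bounded on `E` and its defect
`e ↦ (f ↦ φ f e - f (P i e))` is small. As `F` is finite-dimensional, `X → F*` is onto, and lifting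
the defect through a right inverse corrects `P i` into an operator realizing `φ` on `F` exactly.
-/

open Filter Topology

theorem LinearMap.exists_tendsto₂ {ι R M N P : Type*} [CommSemiring R] [AddCommMonoid M]
    [Module R M] [AddCommMonoid N] [Module R N] [AddCommMonoid P] [Module R P]
    [TopologicalSpace P] [T2Space P] [ContinuousAdd P] [ContinuousConstSMul R P]
    {l : Filter ι} [l.NeBot] (B : ι → M →ₗ[R] N →ₗ[R] P)
    (h : ∀ m n, ∃ p, Tendsto (fun i => B i m n) l (𝓝 p)) :
    ∃ L : M →ₗ[R] N →ₗ[R] P, ∀ m n, Tendsto (fun i => B i m n) l (𝓝 (L m n)) := by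
  have hlim : ∀ t : TensorProduct R M N,
      ∃ p, Tendsto (fun i => TensorProduct.lift (B i) t) l (𝓝 p) := by
    intro t
    induction t using TensorProduct.induction_on with
    | zero => exact ⟨0, by simp⟩
    | tmul m n => simpa using h m n
    | add s t hs ht =>
      obtain ⟨a, ha⟩ := hs
      obtain ⟨b, hb⟩ := ht
      exact ⟨a + b, by simpa using ha.add hb⟩
  choose g hg using hlim
  let L := linearMapOfTendsto g (fun i => TensorProduct.lift (B i)) (tendsto_pi_nhds.2 hg)
  exact ⟨TensorProduct.curry L, fun m n => by simpa [L] using hg (m ⊗ₜ n)⟩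

theorem Ultrafilter.exists_tendsto_of_eventually_norm_le {ι E : Type*} [SeminormedAddCommGroup E]
    [ProperSpace E] (U : Ultrafilter ι) {u : ι → E} {C : ℝ} (h : ∀ᶠ i in U, ‖u i‖ ≤ C) :
    ∃ a, Tendsto u U (𝓝 a) :=
  let ⟨a, _, ha⟩ := (isCompact_closedBall (0 : E) C).ultrafilter_le_nhds' (U.map u)
    (h.mono fun _ hi => mem_closedBall_zero_iff.2 hi)
  ⟨a, ha⟩

theorem ContinuousLinearMap.tendsto_zero_of_forall_tendsto_apply {ι 𝕜 E G : Type*}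
    [NontriviallyNormedField 𝕜] [CompleteSpace 𝕜] [NormedAddCommGroup E] [NormedSpace 𝕜 E]
    [FiniteDimensional 𝕜 E] [NormedAddCommGroup G] [NormedSpace 𝕜 G] {l : Filter ι}
    {A : ι → E →L[𝕜] G} (h : ∀ e, Tendsto (fun i => A i e) l (𝓝 0)) : Tendsto A l (𝓝 0) := by
  let v := Module.finBasis 𝕜 E
  obtain ⟨C, -, hC⟩ := v.exists_opNorm_le (F := G)
  rw [tendsto_zero_iff_norm_tendsto_zero]
  refine squeeze_zero (fun _ => norm_nonneg _) (fun i => hC (M := ∑ j, ‖A i (v j)‖)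
    (by positivity) fun j => Finset.single_le_sum (f := fun j => ‖A i (v j)‖)
      (fun _ _ => norm_nonneg _) (Finset.mem_univ j)) ?_
  simpa using (tendsto_finsetSum _ fun j _ => (h (v j)).norm).const_mul C

theorem exists_rightInverse_dualEval {K X F : Type*} [Field K] [AddCommGroup X] [Module K X]
    [AddCommGroup F] [Module K F] [FiniteDimensional K F] {j : F →ₗ[K] Module.Dual K X}
    (hj : Function.Injective j) : ∃ R : Module.Dual K F →ₗ[K] X, ∀ d f, j f (R d) = d f := by
  obtain ⟨R, hR⟩ := j.flip.exists_rightInverse_of_surjective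
    (LinearMap.range_eq_top.2 (LinearMap.flip_injective_iff₂.1 (by simpa using hj)))
  exact ⟨R, fun d f => congr($hR d f)⟩

theorem eventually_exists_lift_of_tendsto_zero {ι X E F : Type*} [NormedAddCommGroup X]
    [NormedSpace ℝ X] [NormedAddCommGroup E] [NormedSpace ℝ E] [FiniteDimensional ℝ E]
    [AddCommGroup F] [Module ℝ F] [FiniteDimensional ℝ F] {j : F →ₗ[ℝ] Module.Dual ℝ X}
    (hj : Function.Injective j) {l : Filter ι} {D : ι → E →ₗ[ℝ] Module.Dual ℝ F}
    (hD : ∀ e f, Tendsto (fun i => D i e f) l (𝓝 0)) {η : ℝ} (hη : 0 < η) :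
    ∀ᶠ i in l, ∃ S : E →ₗ[ℝ] X,
      ∀ e, (∀ f, j f (S e) = D i e f) ∧ (D i e = 0 → S e = 0) ∧ ‖S e‖ ≤ η * ‖e‖ := by
  obtain ⟨R, hR⟩ := exists_rightInverse_dualEval hj
  let b := Module.finBasis ℝ F
  have hRD : ∀ e, Tendsto (fun i => R (D i e)) l (𝓝 0) := fun e => by
    have hsum : ∀ d, R d = ∑ k, d (b k) • R (b.coord k) := fun d => by
      conv_lhs => rw [← b.sum_dual_apply_smul_coord d]
      simp only [map_sum, map_smul]
    have hlim := tendsto_finsetSum Finset.univ fun k _ =>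
      (hD e (b k)).smul_const (R (b.coord k))
    simp only [zero_smul, Finset.sum_const_zero] at hlim
    exact hlim.congr fun i => (hsum _).symm
  let S : ι → E →L[ℝ] X := fun i => LinearMap.toContinuousLinearMap (R ∘ₗ D i)
  have hS : Tendsto S l (𝓝 0) := ContinuousLinearMap.tendsto_zero_of_forall_tendsto_apply hRD
  filter_upwards [(tendsto_zero_iff_norm_tendsto_zero.1 hS).eventually (ge_mem_nhds hη)]
    with i hi
  refine ⟨S i, fun e => ⟨fun f => hR _ f, fun h => by simp [S, h], ?_⟩⟩
  exact ((S i).le_opNorm e).trans (by gcongr)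

section Net

variable {Y : Type*} [NormedAddCommGroup Y] [NormedSpace ℝ Y] {X : Subspace ℝ Y}

theorem IsIdeal.exists_linearMap (hX : IsIdeal X) {ε : ℝ} (hε : 0 < ε) (E : Subspace ℝ Y)
    [FiniteDimensional ℝ E] :
    ∃ P : Y →ₗ[ℝ] X, ∀ e ∈ E, (e ∈ X → (P e : Y) = e) ∧ ‖P e‖ ≤ (1 + ε) * ‖e‖ := by
  obtain ⟨T, hTX, hTn⟩ := hX ε hε E inferInstance
  obtain ⟨P, hP⟩ := T.exists_extend
  refine ⟨P, fun e he => ?_⟩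
  have hPe : P e = T ⟨e, he⟩ := congr($hP ⟨e, he⟩)
  exact ⟨fun heX => by rw [hPe]; exact hTX _ heX, by rw [hPe]; exact hTn _⟩

theorem IsIdeal.exists_ultrafilter_linearMap (hX : IsIdeal X) :
    ∃ (U : Ultrafilter (Finset Y × ℕ)) (P : Finset Y × ℕ → Y →ₗ[ℝ] X) (δ : Finset Y × ℕ → ℝ),
      Tendsto δ U (𝓝 0) ∧ ∀ E : Subspace ℝ Y, FiniteDimensional ℝ E →
        ∀ᶠ i in U, ∀ e ∈ E, (e ∈ X → (P i e : Y) = e) ∧ ‖P i e‖ ≤ (1 + δ i) * ‖e‖ := by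
  classical
  choose P hP using fun i : Finset Y × ℕ =>
    hX.exists_linearMap (Nat.one_div_pos_of_nat (n := i.2)) (Submodule.span ℝ (i.1 : Set Y))
  refine ⟨Ultrafilter.of atTop, P, fun i => 1 / ((i.2 : ℝ) + 1), ?_, fun E hE => ?_⟩
  · have hsnd : Tendsto (fun i : Finset Y × ℕ => i.2) atTop atTop :=
      tendsto_atTop_atTop.2 fun n => ⟨(∅, n), fun i hi => (Prod.le_def.1 hi).2⟩
    exact (tendsto_one_div_add_atTop_nhds_zero_nat.comp hsnd).mono_left (Ultrafilter.of_le _)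
  · obtain ⟨s, rfl⟩ := (Submodule.fg_iff_finiteDimensional E).2 hE
    exact Ultrafilter.of_le _ <| (eventually_ge_atTop (s, 0)).mono fun i hi e he =>
      hP i e (Submodule.span_mono (by exact_mod_cast hi.1) he)

theorem exists_hahnBanachExtensionOperator_tendsto {ι : Type*} (U : Ultrafilter ι)
    (P : ι → Y →ₗ[ℝ] X) {δ : ι → ℝ} (hδ : Tendsto δ U (𝓝 0))
    (hP : ∀ E : Subspace ℝ Y, FiniteDimensional ℝ E →
      ∀ᶠ i in U, ∀ e ∈ E, (e ∈ X → (P i e : Y) = e) ∧ ‖P i e‖ ≤ (1 + δ i) * ‖e‖) :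
    ∃ φ : (X →L[ℝ] ℝ) →L[ℝ] (Y →L[ℝ] ℝ), IsHahnBanachExtensionOperator X φ ∧
      ∀ f y, Tendsto (fun i => f (P i y)) U (𝓝 (φ f y)) := by
  have hPy : ∀ y, ∀ᶠ i in U, (y ∈ X → (P i y : Y) = y) ∧ ‖P i y‖ ≤ (1 + δ i) * ‖y‖ := fun y =>
    (hP _ inferInstance).mono fun i hi => hi y (Submodule.mem_span_singleton_self y)
  let B : ι → (X →L[ℝ] ℝ) →ₗ[ℝ] Y →ₗ[ℝ] ℝ := fun i =>
    (ContinuousLinearMap.coeLM ℝ).compl₂ (P i)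
  have hB : ∀ f y, ∀ᶠ i in U, ‖B i f y‖ ≤ (1 + δ i) * (‖f‖ * ‖y‖) := fun f y =>
    (hPy y).mono fun i hi => calc
      ‖f (P i y)‖ ≤ ‖f‖ * ‖P i y‖ := f.le_opNorm _
      _ ≤ ‖f‖ * ((1 + δ i) * ‖y‖) := by gcongr; exact hi.2
      _ = (1 + δ i) * (‖f‖ * ‖y‖) := by ring
  obtain ⟨L, hL⟩ := LinearMap.exists_tendsto₂ B fun f y =>
    U.exists_tendsto_of_eventually_norm_le (C := 2 * (‖f‖ * ‖y‖)) <|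
      ((hB f y).and (hδ.eventually (ge_mem_nhds one_pos))).mono fun i hi =>
        hi.1.trans (by gcongr; linarith [hi.2])
  have hLle : ∀ f y, ‖L f y‖ ≤ 1 * ‖f‖ * ‖y‖ := fun f y => by
    simpa [mul_assoc] using le_of_tendsto_of_tendsto (hL f y).norm
      ((hδ.const_add 1).mul_const (‖f‖ * ‖y‖)) (hB f y)
  -- without `E` and the ring homomorphisms the instances on `X →L[ℝ] ℝ` fail to unify
  let φ : (X →L[ℝ] ℝ) →L[ℝ] (Y →L[ℝ] ℝ) :=
    L.mkContinuous₂ (E := X →L[ℝ] ℝ) (σ₁₃ := RingHom.id ℝ) (σ₂₃ := RingHom.id ℝ) 1 hLle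
  have hφX : ∀ f (x : X), φ f x = f x := fun f x =>
    tendsto_nhds_unique (hL f x) <| tendsto_const_nhds.congr' <|
      (hPy x).mono fun i hi => by simp [B, Subtype.ext (hi.1 x.2)]
  refine ⟨φ, fun f => ⟨hφX f, le_antisymm ?_ ?_⟩, hL⟩
  · exact ContinuousLinearMap.opNorm_le_bound _ (norm_nonneg f) fun y => by
      simpa [φ] using hLle f y
  · exact f.opNorm_le_bound (norm_nonneg _) fun x => by
      simpa [hφX] using (φ f).le_opNorm x

theorem exists_linearMap_apply_eq_of_tendsto {ι : Type*} {l : Filter ι} [l.NeBot]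
    (P : ι → Y →ₗ[ℝ] X) {δ : ι → ℝ} (hδ : Tendsto δ l (𝓝 0))
    (hP : ∀ E : Subspace ℝ Y, FiniteDimensional ℝ E →
      ∀ᶠ i in l, ∀ e ∈ E, (e ∈ X → (P i e : Y) = e) ∧ ‖P i e‖ ≤ (1 + δ i) * ‖e‖)
    (φ : (X →L[ℝ] ℝ) →L[ℝ] (Y →L[ℝ] ℝ)) (hφX : ∀ f (x : X), φ f x = f x)
    (hφ : ∀ f y, Tendsto (fun i => f (P i y)) l (𝓝 (φ f y))) :
    ∀ ε : ℝ, 0 < ε → ∀ E : Subspace ℝ Y, FiniteDimensional ℝ E →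
      ∀ F : Subspace ℝ (X →L[ℝ] ℝ), FiniteDimensional ℝ F →
        ∃ T : E →ₗ[ℝ] X,
          (∀ e : E, (e : Y) ∈ X → ((T e : X) : Y) = (e : Y)) ∧
          (∀ e : E, ‖T e‖ ≤ (1 + ε) * ‖e‖) ∧
          (∀ e : E, ∀ f : X →L[ℝ] ℝ, f ∈ F → φ f (e : Y) = f (T e)) := by
  intro ε hε E hE F hF
  let coe : (X →L[ℝ] ℝ) →ₗ[ℝ] X →ₗ[ℝ] ℝ := ContinuousLinearMap.coeLM ℝ
  let D : ι → E →ₗ[ℝ] Module.Dual ℝ F := fun i =>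
    (((ContinuousLinearMap.coeLM ℝ ∘ₗ φ.toLinearMap - coe.compl₂ (P i)) ∘ₗ F.subtype).compl₂
      E.subtype).flip
  have hj : Function.Injective (coe ∘ₗ F.subtype) := fun f g hfg =>
    F.injective_subtype (ContinuousLinearMap.coe_injective hfg)
  have hlift := eventually_exists_lift_of_tendsto_zero (X := X) (E := E) (F := F) hj (D := D)
    (fun e f => by simpa [D, coe] using (tendsto_const_nhds (x := φ f e)).sub (hφ f e))
    (half_pos hε)
  obtain ⟨i, ⟨S, hS⟩, hPi, hδi⟩ :=
    (hlift.and ((hP E hE).and (hδ.eventually (ge_mem_nhds (half_pos hε))))).exists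
  refine ⟨P i ∘ₗ E.subtype + S, fun e he => ?_, fun e => ?_, fun e f hf => ?_⟩
  · have hPe : P i e = ⟨e, he⟩ := Subtype.ext ((hPi e e.2).1 he)
    have hDe : D i e = 0 := LinearMap.ext fun f => by
      simp [D, coe, hPe, hφX f ⟨e, he⟩]
    simp [(hS e).2.1 hDe, hPe]
  · calc ‖P i e + S e‖ ≤ ‖P i e‖ + ‖S e‖ := norm_add_le _ _
      _ ≤ (1 + δ i) * ‖e‖ + ε / 2 * ‖e‖ := add_le_add (hPi e e.2).2 (hS e).2.2
      _ ≤ (1 + ε) * ‖e‖ := by nlinarith [norm_nonneg e]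
  · have hSe : f (S e) = φ f e - f (P i e) := by simpa [D, coe] using (hS e).1 ⟨f, hf⟩
    simp [hSe]

end Net

theorem ideal_hahnBanach_extension_general
    (Y : Type*) [NormedAddCommGroup Y] [NormedSpace ℝ Y]
    (X : Subspace ℝ Y) (hX : IsIdeal X) :
    ∃ φ : (X →L[ℝ] ℝ) →L[ℝ] (Y →L[ℝ] ℝ),
      IsHahnBanachExtensionOperator X φ ∧
      ∀ ε : ℝ, 0 < ε → ∀ E : Subspace ℝ Y, FiniteDimensional ℝ E →
        ∀ F : Subspace ℝ (X →L[ℝ] ℝ), FiniteDimensional ℝ F →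
          ∃ T : E →ₗ[ℝ] X,
            (∀ e : E, (e : Y) ∈ X → ((T e : X) : Y) = (e : Y)) ∧
            (∀ e : E, ‖T e‖ ≤ (1 + ε) * ‖e‖) ∧
            (∀ e : E, ∀ f : X →L[ℝ] ℝ, f ∈ F → φ f (e : Y) = f (T e)) := by
  obtain ⟨U, P, δ, hδ, hP⟩ := hX.exists_ultrafilter_linearMap
  obtain ⟨φ, hφ, hφP⟩ := exists_hahnBanachExtensionOperator_tendsto U P hδ hP
  exact ⟨φ, hφ, exists_linearMap_apply_eq_of_tendsto P hδ hP φ (fun f => (hφ f).1) hφP⟩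

theorem ideal_hahnBanach_extension
    (Y : Type*) [NormedAddCommGroup Y] [NormedSpace ℝ Y] [CompleteSpace Y]
    (X : Subspace ℝ Y) (hXc : IsClosed (X : Set Y)) (hX : IsIdeal X) :
    ∃ φ : (X →L[ℝ] ℝ) →L[ℝ] (Y →L[ℝ] ℝ),
      IsHahnBanachExtensionOperator X φ ∧
      ∀ ε : ℝ, 0 < ε → ∀ E : Subspace ℝ Y, FiniteDimensional ℝ E →
        ∀ F : Subspace ℝ (X →L[ℝ] ℝ), FiniteDimensional ℝ F →
          ∃ T : E →ₗ[ℝ] X,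
            (∀ e : E, (e : Y) ∈ X → ((T e : X) : Y) = (e : Y)) ∧
            (∀ e : E, ‖T e‖ ≤ (1 + ε) * ‖e‖) ∧
            (∀ e : E, ∀ f : X →L[ℝ] ℝ, f ∈ F → φ f (e : Y) = f (T e)) :=
  ideal_hahnBanach_extension_general Y X hX
end

section
/- Let Y be a Banach space and X a closed subspace that is a super-ideal in Y. Then there exists a Hahn-Banach extension operator φ : X* → Y* such that for every ε > 0, every finite-dimensional subspace E ⊆ Y and every finite-dimensional subspace F ⊆ X* there exists a linear map T : E → X satisfying (i) Te = e for all e ∈ X ∩ E, (ii) (1+ε)⁻¹‖e‖ ≤ ‖Te‖ ≤ (1+ε)‖e‖ for all e ∈ E, and (iii) (φ f*)(e) = f*(Te) for all e ∈ E and all f* ∈ F. -/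
universe u v

open Metric Set

/-!
For `(n, s)` with `s` a finite subset of `Y`, the super-ideal property gives a `1/(n+1)`-isometry
`Tₙ,ₛ : span s → X` fixing `X ∩ span s`. Along an ultrafilter finer than `atTop`, the limits
`φ f y = lim f (Tₙ,ₛ y)` exist, are bilinear, satisfy `|φ f y| ≤ ‖f‖ ‖y‖` and `φ f x = f x` on
`X`, so `φ` is a Hahn–Banach extension operator. Given `ε`, `E` and `F`, some `T = Tₙ,ₛ`
restricted to `E` is `ε/2`-isometric and makes the defect `φ f e - f (T e)` small on basis vectors
of `F` and `E`. Adding `S = R ∘ (e ↦ (φ fᵢ e - fᵢ (T e))ᵢ)`, with `R` a right inverse of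
`x ↦ (fᵢ x)ᵢ` for a basis `(fᵢ)` of `F`, removes the defect on `F`; `S` is small and vanishes on
`X`, so `T + S` is still `ε`-isometric and fixes `X ∩ E`.
-/

open Filter Topology

theorem Ultrafilter.tendsto_limUnder_of_eventually_abs_le {ι : Type*} (U : Ultrafilter ι)
    {u : ι → ℝ} {C : ℝ} (h : ∀ᶠ i in U, |u i| ≤ C) :
    Tendsto u U (𝓝 (limUnder (U : Filter ι) u)) := by
  have hmem : (U.map u : Filter ℝ) ≤ 𝓟 (Icc (-C) C) := by
    rw [Ultrafilter.coe_map, le_principal_iff]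
    exact h.mono fun i hi => abs_le.mp hi
  obtain ⟨r, -, hr⟩ := isCompact_Icc.ultrafilter_le_nhds (U.map u) hmem
  exact tendsto_nhds_limUnder ⟨r, hr⟩

section Ultralimit

variable {ι X Y : Type*} [NormedAddCommGroup X] [NormedSpace ℝ X]
  [NormedAddCommGroup Y] [NormedSpace ℝ Y]

theorem Ultrafilter.exists_dualMap_tendsto_of_eventually_linear (U : Ultrafilter ι)
    (p : ι → Y → X) (ε : ι → ℝ) (hε : Tendsto ε U (𝓝 0))
    (hp : ∀ y, ∀ᶠ α in U, ‖p α y‖ ≤ (1 + ε α) * ‖y‖)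
    (hadd : ∀ y y', ∀ᶠ α in U, p α (y + y') = p α y + p α y')
    (hsmul : ∀ (c : ℝ) y, ∀ᶠ α in U, p α (c • y) = c • p α y) :
    ∃ φ : (X →L[ℝ] ℝ) →L[ℝ] (Y →L[ℝ] ℝ), (∀ f, ‖φ f‖ ≤ ‖f‖) ∧
      ∀ f y, Tendsto (fun α => f (p α y)) U (𝓝 (φ f y)) := by
  set L : (X →L[ℝ] ℝ) → Y → ℝ := fun f y => limUnder (U : Filter ι) fun α => f (p α y)
  have hbound : ∀ (f : X →L[ℝ] ℝ) y, ∀ᶠ α in U, |f (p α y)| ≤ ‖f‖ * ((1 + ε α) * ‖y‖) :=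
    fun f y => (hp y).mono fun α hα => (f.le_opNorm _).trans (by gcongr)
  have hL : ∀ f y, Tendsto (fun α => f (p α y)) U (𝓝 (L f y)) := by
    intro f y
    refine U.tendsto_limUnder_of_eventually_abs_le (C := ‖f‖ * (2 * ‖y‖)) ?_
    filter_upwards [hbound f y, hε.eventually (gt_mem_nhds one_pos)] with α hα hε1
    exact hα.trans (by gcongr; linarith)
  have hL_bound : ∀ f y, ‖L f y‖ ≤ 1 * ‖f‖ * ‖y‖ := by
    intro f y
    have hlim : Tendsto (fun α => ‖f‖ * ((1 + ε α) * ‖y‖)) U (𝓝 (‖f‖ * ((1 + 0) * ‖y‖))) :=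
      ((hε.const_add 1).mul_const _).const_mul _
    simpa [mul_assoc] using le_of_tendsto_of_tendsto (hL f y).abs hlim (hbound f y)
  let B : (X →L[ℝ] ℝ) →ₗ[ℝ] Y →ₗ[ℝ] ℝ := LinearMap.mk₂ ℝ L
    (fun f f' y => tendsto_nhds_unique (hL (f + f') y) ((hL f y).add (hL f' y)))
    (fun c f y => tendsto_nhds_unique (hL (c • f) y) ((hL f y).const_mul c))
    (fun f y y' => tendsto_nhds_unique (hL f (y + y'))
      (((hL f y).add (hL f y')).congr' ((hadd y y').mono fun α hα => by simp [hα])))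
    (fun c f y => tendsto_nhds_unique (hL f (c • y))
      (((hL f y).const_mul c).congr' ((hsmul c y).mono fun α hα => by simp [hα])))
  refine ⟨B.mkContinuous₂ 1 hL_bound, fun f => ?_, hL⟩
  calc ‖B.mkContinuous₂ 1 hL_bound f‖ ≤ ‖B.mkContinuous₂ 1 hL_bound‖ * ‖f‖ :=
        ContinuousLinearMap.le_opNorm _ _
    _ ≤ 1 * ‖f‖ := by gcongr; exact LinearMap.mkContinuous₂_norm_le _ zero_le_one _
    _ = ‖f‖ := one_mul _

end Ultralimit

theorem exists_linearMap_apply_eq_of_linearIndependent {K V ι : Type*} [Field K]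
    [AddCommGroup V] [Module K V] [Finite ι] {f : ι → V →ₗ[K] K}
    (hf : LinearIndependent K f) : ∃ R : (ι → K) →ₗ[K] V, ∀ w i, f i (R w) = w i := by
  have hcoe : LinearIndependent K fun i => ⇑(f i) :=
    hf.map' (LinearMap.ltoFun K V K K) (LinearMap.ker_eq_bot.mpr DFunLike.coe_injective)
  have hrange : LinearMap.range (LinearMap.pi f) = ⊤ := by
    rw [← Submodule.span_eq (LinearMap.range (LinearMap.pi f)), LinearMap.coe_range]
    exact span_flip_eq_top_iff_linearIndependent.mpr hcoe
  obtain ⟨R, hR⟩ := (LinearMap.pi f).exists_rightInverse_of_surjective hrange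
  exact ⟨R, fun w i => congr_fun (LinearMap.congr_fun hR w) i⟩

theorem exists_small_realization_of_bilinear {E X : Type*} [NormedAddCommGroup E]
    [NormedSpace ℝ E] [FiniteDimensional ℝ E] [NormedAddCommGroup X] [NormedSpace ℝ X]
    (F : Subspace ℝ (X →L[ℝ] ℝ)) [FiniteDimensional ℝ F] {c : ℝ} (hc : 0 < c) :
    ∃ (Q : Finset (F × E)) (δ : ℝ), 0 < δ ∧ ∀ Δ : F →ₗ[ℝ] E →ₗ[ℝ] ℝ,
      (∀ q ∈ Q, |Δ q.1 q.2| ≤ δ) →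
      ∃ S : E →ₗ[ℝ] X, (∀ (f : F) (e : E), (f : X →L[ℝ] ℝ) (S e) = Δ f e) ∧
        (∀ e, ‖S e‖ ≤ c * ‖e‖) ∧ ∀ e, (∀ f, Δ f e = 0) → S e = 0 := by
  classical
  have := Module.Free.of_divisionRing ℝ F
  set bF := Module.finBasis ℝ F
  set bE := Module.finBasis ℝ E
  set toLin : F →ₗ[ℝ] X →ₗ[ℝ] ℝ :=
    (ContinuousLinearMap.coeLM ℝ : (X →L[ℝ] ℝ) →ₗ[ℝ] X →ₗ[ℝ] ℝ) ∘ₗ F.subtype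
  have hbF : LinearIndependent ℝ (toLin ∘ bF) := bF.linearIndependent.map_injOn toLin
    (ContinuousLinearMap.coe_injective.comp Subtype.val_injective).injOn
  obtain ⟨R, hR⟩ := exists_linearMap_apply_eq_of_linearIndependent hbF
  obtain ⟨C, hC, hCE⟩ := bE.exists_opNorm_le (F := Fin (Module.finrank ℝ F) → ℝ)
  set r := ‖LinearMap.toContinuousLinearMap R‖
  refine ⟨Finset.univ.image fun ij : _ × _ => (bF ij.1, bE ij.2), c / ((r + 1) * C),
    by positivity, fun Δ hΔ => ?_⟩
  set D : E →ₗ[ℝ] Fin (Module.finrank ℝ F) → ℝ := LinearMap.pi fun i => Δ (bF i)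
  have hD : ‖LinearMap.toContinuousLinearMap D‖ ≤ C * (c / ((r + 1) * C)) := by
    refine hCE (by positivity) fun j => (pi_norm_le_iff_of_nonneg (by positivity)).mpr fun i => ?_
    exact hΔ _ (Finset.mem_image_of_mem _ (Finset.mem_univ (i, j)))
  refine ⟨R ∘ₗ D, fun f e => ?_, fun e => ?_, fun e he => ?_⟩
  · refine LinearMap.congr_fun (bF.ext (f₂ := Δ.flip e) (f₁ :=
      (ContinuousLinearMap.apply ℝ ℝ (R (D e)) : (X →L[ℝ] ℝ) →ₗ[ℝ] ℝ) ∘ₗ F.subtype)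
      fun i => ?_) f
    exact hR (D e) i
  · calc ‖R (D e)‖ ≤ r * ‖D e‖ := (LinearMap.toContinuousLinearMap R).le_opNorm (D e)
      _ ≤ r * (C * (c / ((r + 1) * C)) * ‖e‖) := by
          gcongr
          exact ((LinearMap.toContinuousLinearMap D).le_opNorm e).trans (by gcongr)
      _ ≤ c * ‖e‖ := by
          rw [← mul_assoc]
          gcongr
          rw [mul_div_assoc', mul_div_assoc', div_le_iff₀ (by positivity)]
          nlinarith [norm_nonneg (LinearMap.toContinuousLinearMap R)]
  · have hD0 : D e = 0 := funext fun i => he (bF i)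
    simp [hD0]

section AlmostIsometry

variable {E X : Type*} [NormedAddCommGroup E] [NormedSpace ℝ E]
  [NormedAddCommGroup X] [NormedSpace ℝ X]

def IsAlmostIsometry (ε : ℝ) (T : E →ₗ[ℝ] X) : Prop :=
  ∀ e, (1 + ε)⁻¹ * ‖e‖ ≤ ‖T e‖ ∧ ‖T e‖ ≤ (1 + ε) * ‖e‖

variable {ε ε' : ℝ} {T : E →ₗ[ℝ] X}

theorem IsAlmostIsometry.mono (hT : IsAlmostIsometry ε' T) (hε' : 0 ≤ ε') (h : ε' ≤ ε) :
    IsAlmostIsometry ε T := fun e =>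
  ⟨le_trans (by gcongr) (hT e).1, (hT e).2.trans (by gcongr)⟩

theorem IsAlmostIsometry.comp_inclusion {Y : Type*} [NormedAddCommGroup Y] [NormedSpace ℝ Y]
    {E E' : Subspace ℝ Y} (h : E ≤ E') {T : E' →ₗ[ℝ] X} (hT : IsAlmostIsometry ε T) :
    IsAlmostIsometry ε (T ∘ₗ Submodule.inclusion h) := fun e =>
  hT (Submodule.inclusion h e)

theorem IsAlmostIsometry.add (hT : IsAlmostIsometry ε' T) {S : E →ₗ[ℝ] X} {c : ℝ}
    (hS : ∀ e, ‖S e‖ ≤ c * ‖e‖) (hc : c ≤ ε - ε') (hc' : c ≤ (1 + ε')⁻¹ - (1 + ε)⁻¹) :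
    IsAlmostIsometry ε (T + S) := by
  intro e
  have hce := mul_le_mul_of_nonneg_right hc (norm_nonneg e)
  have hce' := mul_le_mul_of_nonneg_right hc' (norm_nonneg e)
  have hlower : ‖T e‖ ≤ ‖T e + S e‖ + ‖S e‖ := by
    simpa using norm_sub_le (T e + S e) (S e)
  rw [LinearMap.add_apply]
  constructor <;> nlinarith [hT e, hS e, norm_add_le (T e) (S e)]

end AlmostIsometry

section HahnBanach

variable {Y : Type*} [NormedAddCommGroup Y] [NormedSpace ℝ Y] {X : Subspace ℝ Y}

theorem isHahnBanachExtensionOperator_of_norm_le {φ : (X →L[ℝ] ℝ) →L[ℝ] (Y →L[ℝ] ℝ)}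
    (hext : ∀ f (x : X), φ f x = f x) (hle : ∀ f, ‖φ f‖ ≤ ‖f‖) :
    IsHahnBanachExtensionOperator X φ := fun f =>
  ⟨hext f, (hle f).antisymm <| ContinuousLinearMap.opNorm_le_bound _ (norm_nonneg _) fun x =>
    hext f x ▸ (φ f).le_opNorm x⟩

noncomputable def extensionDefect {E : Subspace ℝ Y} (φ : (X →L[ℝ] ℝ) →L[ℝ] (Y →L[ℝ] ℝ)) (T : E →ₗ[ℝ] X) :
    (X →L[ℝ] ℝ) →ₗ[ℝ] E →ₗ[ℝ] ℝ :=
  LinearMap.mk₂ ℝ (fun f e => φ f e - f (T e))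
    (fun f f' e => by simp only [map_add, add_apply]; ring)
    (fun c f e => by simp only [map_smul, smul_apply, smul_eq_mul]; ring)
    (fun f e e' => by simp only [Submodule.coe_add, map_add]; ring)
    (fun c f e => by simp only [SetLike.val_smul, map_smul, smul_eq_mul]; ring)

@[simp]
theorem extensionDefect_apply {E : Subspace ℝ Y} (φ : (X →L[ℝ] ℝ) →L[ℝ] (Y →L[ℝ] ℝ))
    (T : E →ₗ[ℝ] X) (f : X →L[ℝ] ℝ) (e : E) : extensionDefect φ T f e = φ f e - f (T e) :=
  rfl

end HahnBanach

theorem eventually_le_span_finset {K V : Type*} [DivisionRing K] [AddCommGroup V] [Module K V]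
    (E : Submodule K V) [FiniteDimensional K E] :
    ∀ᶠ α : ℕ × Finset V in atTop, E ≤ Submodule.span K (α.2 : Set V) := by
  obtain ⟨s, rfl⟩ := (Submodule.fg_iff_finiteDimensional E).mpr ‹_›
  filter_upwards [eventually_ge_atTop (0, s)] with α hα
  exact Submodule.span_mono (by exact_mod_cast hα.2)

theorem tendsto_one_div_fst_add_one_atTop {β : Type*} [Preorder β] [IsDirected β (· ≤ ·)]
    [Nonempty β] : Tendsto (fun α : ℕ × β => 1 / ((α.1 : ℝ) + 1)) atTop (𝓝 0) := by
  rw [← prod_atTop_atTop_eq]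
  exact tendsto_one_div_add_atTop_nhds_zero_nat.comp tendsto_fst

section SuperIdeal

variable {Y : Type*} [NormedAddCommGroup Y] [NormedSpace ℝ Y] {X : Subspace ℝ Y}

noncomputable def IsSuperIdeal.localMap (hX : IsSuperIdeal X) (α : ℕ × Finset Y) :
    Submodule.span ℝ (α.2 : Set Y) →ₗ[ℝ] X :=
  (hX (1 / (α.1 + 1)) Nat.one_div_pos_of_nat _ inferInstance).choose

namespace IsSuperIdeal

variable (hX : IsSuperIdeal X) (α : ℕ × Finset Y)

theorem localMap_apply_of_mem (e : Submodule.span ℝ (α.2 : Set Y)) (he : (e : Y) ∈ X) :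
    (hX.localMap α e : Y) = e :=
  (hX (1 / (α.1 + 1)) Nat.one_div_pos_of_nat _ inferInstance).choose_spec.1 e he

theorem isAlmostIsometry_localMap : IsAlmostIsometry (1 / (α.1 + 1)) (hX.localMap α) :=
  (hX (1 / (α.1 + 1)) Nat.one_div_pos_of_nat _ inferInstance).choose_spec.2

-- The value `0` off the span is irrelevant: every `y` lies in the span eventually.
open Classical in
noncomputable def approxRetraction (y : Y) : X :=
  if h : y ∈ Submodule.span ℝ (α.2 : Set Y) then hX.localMap α ⟨y, h⟩ else 0

variable {α}

theorem approxRetraction_of_mem {y : Y} (h : y ∈ Submodule.span ℝ (α.2 : Set Y)) :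
    hX.approxRetraction α y = hX.localMap α ⟨y, h⟩ :=
  dif_pos h

variable (α)

theorem norm_approxRetraction_le (y : Y) :
    ‖hX.approxRetraction α y‖ ≤ (1 + 1 / (α.1 + 1)) * ‖y‖ := by
  by_cases h : y ∈ Submodule.span ℝ (α.2 : Set Y)
  · rw [hX.approxRetraction_of_mem h]
    exact (hX.isAlmostIsometry_localMap α ⟨y, h⟩).2
  · rw [approxRetraction, dif_neg h, norm_zero]
    positivity

end IsSuperIdeal

theorem IsSuperIdeal.exists_hahnBanachExtension_approx (hX : IsSuperIdeal X) :
    ∃ φ : (X →L[ℝ] ℝ) →L[ℝ] (Y →L[ℝ] ℝ), IsHahnBanachExtensionOperator X φ ∧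
      ∀ ε : ℝ, 0 < ε → ∀ E : Subspace ℝ Y, FiniteDimensional ℝ E →
        ∀ (Q : Finset ((X →L[ℝ] ℝ) × E)) (δ : ℝ), 0 < δ →
          ∃ T : E →ₗ[ℝ] X, (∀ e : E, (e : Y) ∈ X → (T e : Y) = e) ∧ IsAlmostIsometry ε T ∧
            ∀ q ∈ Q, |extensionDefect φ T q.1 q.2| ≤ δ := by
  classical
  obtain ⟨U, hU⟩ := (atTop : Filter (ℕ × Finset Y)).exists_ultrafilter_le
  have hmem : ∀ y : Y, ∀ᶠ α : ℕ × Finset Y in U, y ∈ Submodule.span ℝ (α.2 : Set Y) :=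
    fun y => hU <| (eventually_le_span_finset (Submodule.span ℝ {y})).mono fun _ h =>
      h (Submodule.mem_span_singleton_self y)
  obtain ⟨φ, hφ, hlim⟩ := U.exists_dualMap_tendsto_of_eventually_linear hX.approxRetraction _
    (tendsto_one_div_fst_add_one_atTop.mono_left hU)
    (fun y => .of_forall fun α => hX.norm_approxRetraction_le α y)
    (fun y y' => (hmem y).mp <| (hmem y').mono fun α hy' hy => by
      rw [hX.approxRetraction_of_mem (add_mem hy hy'), hX.approxRetraction_of_mem hy,
        hX.approxRetraction_of_mem hy', ← map_add]
      rfl)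
    (fun c y => (hmem y).mono fun α hy => by
      rw [hX.approxRetraction_of_mem (Submodule.smul_mem _ c hy), hX.approxRetraction_of_mem hy,
        ← map_smul]
      rfl)
  have hext : ∀ f (x : X), φ f x = f x := fun f x =>
    tendsto_nhds_unique (hlim f x) <| tendsto_const_nhds.congr' <| (hmem x).mono fun α hx => by
      simp only [hX.approxRetraction_of_mem hx]
      congr 1
      exact Subtype.ext (hX.localMap_apply_of_mem α ⟨x, hx⟩ x.2).symm
  refine ⟨φ, isHahnBanachExtensionOperator_of_norm_le hext hφ, fun ε hε E hE Q δ hδ => ?_⟩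
  have hclose : ∀ q ∈ Q, ∀ᶠ α in U, |φ q.1 q.2 - q.1 (hX.approxRetraction α q.2)| ≤ δ :=
    fun q _ => ((hlim q.1 q.2).eventually (Metric.closedBall_mem_nhds _ hδ)).mono fun α hα => by
      rwa [Real.dist_eq, abs_sub_comm] at hα
  have hαE : ∀ᶠ α : ℕ × Finset Y in U, E ≤ Submodule.span ℝ (α.2 : Set Y) :=
    hU (eventually_le_span_finset E)
  obtain ⟨α, ⟨hαE, hαε⟩, hαQ⟩ := (hαE.and
    ((tendsto_one_div_fst_add_one_atTop.mono_left hU).eventually (ge_mem_nhds hε)) |>.and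
    ((Q.eventually_all).mpr hclose)).exists
  refine ⟨hX.localMap α ∘ₗ Submodule.inclusion hαE, fun e he => hX.localMap_apply_of_mem α _ he,
    ((hX.isAlmostIsometry_localMap α).comp_inclusion hαE).mono (by positivity) hαε,
    fun q hq => ?_⟩
  have := hαQ q hq
  rwa [hX.approxRetraction_of_mem (hαE q.2.2)] at this

end SuperIdeal

theorem superIdeal_hahnBanach_extension_general
    (Y : Type*) [NormedAddCommGroup Y] [NormedSpace ℝ Y]
    (X : Subspace ℝ Y) (hX : IsSuperIdeal X) :
    ∃ φ : (X →L[ℝ] ℝ) →L[ℝ] (Y →L[ℝ] ℝ),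
      IsHahnBanachExtensionOperator X φ ∧
      ∀ ε : ℝ, 0 < ε → ∀ E : Subspace ℝ Y, FiniteDimensional ℝ E →
        ∀ F : Subspace ℝ (X →L[ℝ] ℝ), FiniteDimensional ℝ F →
          ∃ T : E →ₗ[ℝ] X,
            (∀ e : E, (e : Y) ∈ X → ((T e : X) : Y) = (e : Y)) ∧
            (∀ e : E, (1 + ε)⁻¹ * ‖e‖ ≤ ‖T e‖ ∧ ‖T e‖ ≤ (1 + ε) * ‖e‖) ∧
            (∀ e : E, ∀ f : X →L[ℝ] ℝ, f ∈ F → φ f (e : Y) = f (T e)) := by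
  classical
  obtain ⟨φ, hφ, happrox⟩ := hX.exists_hahnBanachExtension_approx
  refine ⟨φ, hφ, fun ε hε E hE F hF => ?_⟩
  set c := min (ε - ε / 2) ((1 + ε / 2)⁻¹ - (1 + ε)⁻¹)
  have hc : 0 < c := lt_min (by linarith) (sub_pos.mpr (by gcongr; linarith))
  obtain ⟨Q, δ, hδ, hrealize⟩ := exists_small_realization_of_bilinear (E := E) F hc
  obtain ⟨T₀, hT₀X, hT₀, hT₀Q⟩ := happrox (ε / 2) (by positivity) E hE
    (Q.image fun q => ((q.1 : X →L[ℝ] ℝ), q.2)) δ hδ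
  obtain ⟨S, hSF, hS, hS0⟩ := hrealize ((extensionDefect φ T₀).domRestrict F) fun q hq =>
    hT₀Q ((q.1 : X →L[ℝ] ℝ), q.2) (Finset.mem_image_of_mem _ hq)
  refine ⟨T₀ + S, fun e he => ?_, hT₀.add hS (min_le_left _ _) (min_le_right _ _),
    fun e f hf => ?_⟩
  · have hT₀e : T₀ e = ⟨e, he⟩ := Subtype.ext (hT₀X e he)
    have hS0e : S e = 0 := hS0 e fun f => by
      simpa [hT₀e] using sub_eq_zero.mpr ((hφ f).1 ⟨e, he⟩)
    rw [LinearMap.add_apply, hS0e, add_zero, hT₀e]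
  · have := hSF ⟨f, hf⟩ e
    rw [LinearMap.domRestrict_apply, extensionDefect_apply] at this
    rw [LinearMap.add_apply, map_add, this]
    ring

theorem superIdeal_hahnBanach_extension
    (Y : Type*) [NormedAddCommGroup Y] [NormedSpace ℝ Y] [CompleteSpace Y]
    (X : Subspace ℝ Y) (hXc : IsClosed (X : Set Y)) (hX : IsSuperIdeal X) :
    ∃ φ : (X →L[ℝ] ℝ) →L[ℝ] (Y →L[ℝ] ℝ),
      IsHahnBanachExtensionOperator X φ ∧
      ∀ ε : ℝ, 0 < ε → ∀ E : Subspace ℝ Y, FiniteDimensional ℝ E →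
        ∀ F : Subspace ℝ (X →L[ℝ] ℝ), FiniteDimensional ℝ F →
          ∃ T : E →ₗ[ℝ] X,
            (∀ e : E, (e : Y) ∈ X → ((T e : X) : Y) = (e : Y)) ∧
            (∀ e : E, (1 + ε)⁻¹ * ‖e‖ ≤ ‖T e‖ ∧ ‖T e‖ ≤ (1 + ε) * ‖e‖) ∧
            (∀ e : E, ∀ f : X →L[ℝ] ℝ, f ∈ F → φ f (e : Y) = f (T e)) :=
  superIdeal_hahnBanach_extension_general Y X hX
end

section
/- Let Y be a Banach space and X a closed subspace of Y. If X is a strict ideal in Y, that is, there exists a Hahn-Banach extension operator φ : X* → Y* whose range is 1-norming for Y, then X is a super-ideal in Y. -/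
universe u v

open Metric Set

/-!
Fix `ε > 0` and a finite-dimensional `E ⊆ Y`. Take a finite `δ`-net `(p k)` of the unit sphere
of `E` and, since the range of `φ` is 1-norming, functionals `f k ∈ X*` with `‖φ (f k)‖ ≤ 1` and
`|φ (f k) (p k)| > 1 - δ`. The map `e ↦ (f ↦ φ f e)` sends `E` contractively into the bidual of
`X` and agrees with the canonical embedding on `E ∩ X`. A Helly-type argument (separation in a
finite-dimensional space, then Hahn–Banach extension) pulls it back to a linear `T : E → X` fixing
`E ∩ X` with `f k (T (p k)) = φ (f k) (p k)` and `‖T (p k)‖ ≤ 1 + δ`. Hence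
`1 - δ ≤ ‖T (p k)‖ ≤ 1 + δ` on the net, and a net argument makes `T` a `(1 + ε)`-isomorphism.
-/

section Helly

variable {Z F : Type*} [NormedAddCommGroup Z] [NormedSpace ℝ Z]
  [NormedAddCommGroup F] [NormedSpace ℝ F]

theorem LinearMap.closure_image_closedBall_subset [FiniteDimensional ℝ F] (Φ : Z →ₗ[ℝ] F)
    {r : ℝ} (hr : 1 < r) : closure (Φ '' closedBall 0 1) ⊆ Φ '' closedBall 0 r := by
  intro c hc
  obtain ⟨D, hD⟩ := Φ.rangeRestrict.exists_rightInverse_of_surjective Φ.range_rangeRestrict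
  have hΦD (w : LinearMap.range Φ) : Φ (D w) = w := congrArg Subtype.val (LinearMap.congr_fun hD w)
  set K := ‖LinearMap.toContinuousLinearMap D‖
  have hK : 0 ≤ K := norm_nonneg (LinearMap.toContinuousLinearMap D)
  have hcR : c ∈ LinearMap.range Φ :=
    closure_minimal (image_subset_iff.2 fun z _ => LinearMap.mem_range_self Φ z)
      (Submodule.closed_of_finiteDimensional _) hc
  obtain ⟨_, ⟨z, hz, rfl⟩, hdist⟩ :=
    Metric.mem_closure_iff.1 hc ((r - 1) / (K + 1)) (by positivity)
  set w : LinearMap.range Φ := ⟨c - Φ z, sub_mem hcR (LinearMap.mem_range_self Φ z)⟩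
  refine ⟨z + D w, ?_, by simp [hΦD, w]⟩
  have hw : ‖w‖ ≤ (r - 1) / (K + 1) := (dist_eq_norm c (Φ z) ▸ hdist).le
  have hKw : K * ‖w‖ ≤ r - 1 := by
    calc K * ‖w‖ ≤ (K + 1) * ((r - 1) / (K + 1)) := by gcongr; linarith
      _ = r - 1 := mul_div_cancel₀ _ (by positivity)
  rw [mem_closedBall_zero_iff] at hz ⊢
  calc ‖z + D w‖ ≤ ‖z‖ + K * ‖w‖ := (norm_add_le _ _).trans
        (add_le_add le_rfl ((LinearMap.toContinuousLinearMap D).le_opNorm w))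
    _ ≤ r := by linarith

theorem ContinuousLinearMap.mem_closure_image_closedBall_of_forall_le (Φ : Z →L[ℝ] F) {c : F}
    (hc : ∀ ℓ : StrongDual ℝ F, ℓ c ≤ ‖ℓ ∘L Φ‖) : c ∈ closure (Φ '' closedBall 0 1) := by
  by_contra hnot
  have hconv : Convex ℝ (closure (Φ '' closedBall (0 : Z) 1)) :=
    ((convex_closedBall 0 1).linear_image Φ.toLinearMap).closure
  obtain ⟨ℓ, u, hlt, hu⟩ := geometric_hahn_banach_closed_point hconv isClosed_closure hnot
  have hball (z : Z) (hz : ‖z‖ ≤ 1) : ℓ (Φ z) < u :=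
    hlt _ (subset_closure ⟨z, mem_closedBall_zero_iff.2 hz, rfl⟩)
  have hu0 : 0 < u := by simpa using hball 0 (by simp)
  have hnorm : ‖ℓ ∘L Φ‖ ≤ u := by
    refine ContinuousLinearMap.opNorm_le_of_unit_norm hu0.le
      fun z hz => abs_le.2 ⟨?_, (hball z hz.le).le⟩
    have := hball (-z) (by simp [hz])
    simp only [map_neg] at this
    simp only [ContinuousLinearMap.comp_apply]
    linarith
  linarith [hc ℓ]

/-- Helly's lemma. -/
theorem ContinuousLinearMap.exists_norm_le_apply_eq_of_forall_le [FiniteDimensional ℝ F]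
    (Φ : Z →L[ℝ] F) {c : F} (hc : ∀ ℓ : StrongDual ℝ F, ℓ c ≤ ‖ℓ ∘L Φ‖) {r : ℝ} (hr : 1 < r) :
    ∃ z, ‖z‖ ≤ r ∧ Φ z = c := by
  obtain ⟨z, hz, rfl⟩ := (Φ : Z →ₗ[ℝ] F).closure_image_closedBall_subset hr
    (Φ.mem_closure_image_closedBall_of_forall_le hc)
  exact ⟨z, mem_closedBall_zero_iff.1 hz, rfl⟩

end Helly

section Bidual

variable {X : Type*} [NormedAddCommGroup X] [NormedSpace ℝ X]

theorem exists_forall_apply_eq_of_bidual {Λ : Type*} [Fintype Λ] (f : Λ → StrongDual ℝ X)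
    (ξ : StrongDual ℝ X →ₗ[ℝ] ℝ) : ∃ x : X, ∀ j, f j x = ξ (f j) := by
  classical
  set M : X →ₗ[ℝ] Λ → ℝ := LinearMap.pi fun j => (f j : X →ₗ[ℝ] ℝ)
  suffices (fun j => ξ (f j)) ∈ LinearMap.range M by
    obtain ⟨x, hx⟩ := this
    exact ⟨x, fun j => congrFun hx j⟩
  rw [← Subspace.forall_mem_dualAnnihilator_apply_eq_zero_iff]
  intro ℓ hℓ
  rw [Submodule.mem_dualAnnihilator] at hℓ
  have hsum : ∑ i, ℓ (fun j => if i = j then 1 else 0) • f i = 0 := by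
    ext x
    simpa [LinearMap.pi_apply_eq_sum_univ ℓ (M x), M, mul_comm] using
      hℓ (M x) (LinearMap.mem_range_self M x)
  have := congrArg ξ hsum
  simp only [map_sum, map_smul, smul_eq_mul, map_zero] at this
  rw [LinearMap.pi_apply_eq_sum_univ ℓ]
  simpa [mul_comm] using this

variable {E : Type*} [AddCommGroup E] [Module ℝ E] {E₀ : Submodule ℝ E}

theorem exists_extension_apply_eq_of_bidual (T₀ : E₀ →ₗ[ℝ] X)
    (S : E →ₗ[ℝ] StrongDual ℝ X →ₗ[ℝ] ℝ) (hS : ∀ (e : E₀) (f : StrongDual ℝ X), S e f = f (T₀ e))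
    {Λ : Type*} [Fintype Λ] (f : Λ → StrongDual ℝ X) :
    ∃ T : E →ₗ[ℝ] X, (∀ e : E₀, T e = T₀ e) ∧ ∀ j e, f j (T e) = S e (f j) := by
  set M : X →ₗ[ℝ] Λ → ℝ := LinearMap.pi fun j => (f j : X →ₗ[ℝ] ℝ)
  obtain ⟨T₁, hT₁⟩ := LinearMap.exists_extend T₀
  have hT₁e (e : E₀) : T₁ e = T₀ e := LinearMap.congr_fun hT₁ e
  set D : E →ₗ[ℝ] Λ → ℝ := LinearMap.pi (fun j => S.flip (f j)) - M ∘ₗ T₁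
  have hD (e : E) (j : Λ) : D e j = S e (f j) - f j (T₁ e) := rfl
  have hDM (e : E) : D e ∈ LinearMap.range M := by
    obtain ⟨x, hx⟩ := exists_forall_apply_eq_of_bidual f (S e)
    exact ⟨x - T₁ e, funext fun j => by simp [M, hD, hx]⟩
  obtain ⟨g, hg⟩ := M.rangeRestrict.exists_rightInverse_of_surjective M.range_rangeRestrict
  have hMg (y : LinearMap.range M) (j : Λ) : f j (g y) = (y : Λ → ℝ) j :=
    congrFun (congrArg Subtype.val (LinearMap.congr_fun hg y)) j
  refine ⟨T₁ + g ∘ₗ D.codRestrict _ hDM, fun e => ?_, fun j e => ?_⟩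
  · have : D.codRestrict _ hDM e = 0 := Subtype.ext <| funext fun j => by simp [hD, hS, hT₁e]
    simp [hT₁e, this]
  · simp only [LinearMap.add_apply, LinearMap.comp_apply, map_add, hMg,
      LinearMap.codRestrict_apply, hD]
    ring

theorem ContinuousLinearMap.exists_norm_le_one_lt_apply (ψ : StrongDual ℝ X) {c : ℝ}
    (hc : c < ‖ψ‖) : ∃ x : X, ‖x‖ ≤ 1 ∧ c < ψ x := by
  obtain ⟨x, hx, hcx⟩ := ψ.exists_lt_apply_of_lt_opNorm hc
  rcases le_total 0 (ψ x) with h | h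
  · exact ⟨x, hx.le, by rwa [Real.norm_of_nonneg h] at hcx⟩
  · exact ⟨-x, by simpa using hx.le, by rwa [Real.norm_of_nonpos h, ← map_neg] at hcx⟩

variable {κ : Type*} [DecidableEq κ]

def inrSingle (k : κ) : X →L[ℝ] ℝ × (κ → X) :=
  ContinuousLinearMap.inr ℝ ℝ (κ → X) ∘L ContinuousLinearMap.single ℝ (fun _ : κ => X) k

@[simp]
theorem inrSingle_apply (k : κ) (x : X) : inrSingle k x = (0, Pi.single k x) := rfl

theorem ContinuousLinearMap.apply_prod_pi [Fintype κ] (h : StrongDual ℝ (ℝ × (κ → X)))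
    (v : ℝ × (κ → X)) : h v = v.1 * h (1, 0) + ∑ k, (h ∘L inrSingle k) (v.2 k) := by
  conv_lhs => rw [show v = v.1 • ((1 : ℝ), (0 : κ → X)) + ∑ k, inrSingle k (v.2 k) by
    ext <;> simp [Prod.fst_sum, Prod.snd_sum, Finset.univ_sum_single]]
  rw [map_add, map_smul, map_sum, smul_eq_mul]
  rfl

theorem ContinuousLinearMap.abs_apply_add_sum_norm_comp_inrSingle_le [Fintype κ]
    (h : StrongDual ℝ (ℝ × (κ → X))) : |h (1, 0)| + ∑ k, ‖h ∘L inrSingle k‖ ≤ ‖h‖ := by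
  refine le_of_forall_pos_le_add fun η hη => ?_
  set η' := η / (Fintype.card κ + 1)
  choose x hx hψx using fun k => (h ∘L inrSingle k).exists_norm_le_one_lt_apply
    (sub_lt_self ‖h ∘L inrSingle k‖ (by positivity : 0 < η'))
  obtain ⟨σ, hσ, hσh⟩ : ∃ σ : ℝ, |σ| ≤ 1 ∧ |h (1, 0)| = σ * h (1, 0) := by
    rcases le_total 0 (h (1, 0)) with h0 | h0
    · exact ⟨1, by simp, by simp [abs_of_nonneg h0]⟩
    · exact ⟨-1, by simp, by simp [abs_of_nonpos h0]⟩
  have hnorm : ‖((σ, x) : ℝ × (κ → X))‖ ≤ 1 :=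
    max_le (by simpa using hσ) ((pi_norm_le_iff_of_nonneg zero_le_one).2 hx)
  have hη' : Fintype.card κ * η' ≤ η := by
    rw [mul_div_assoc']
    exact div_le_of_le_mul₀ (by positivity) hη.le (by linarith)
  calc |h (1, 0)| + ∑ k, ‖h ∘L inrSingle k‖
      ≤ σ * h (1, 0) + ∑ k, ((h ∘L inrSingle k) (x k) + η') := by
        rw [hσh]; gcongr with k; linarith [hψx k]
    _ = h (σ, x) + Fintype.card κ * η' := by
        rw [h.apply_prod_pi (σ, x), Finset.sum_add_distrib, Finset.sum_const, Finset.card_univ,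
          nsmul_eq_mul]
        ring
    _ ≤ ‖h‖ + η := by
        gcongr
        exact (le_abs_self _).trans (h.le_opNorm_of_le hnorm |>.trans_eq (mul_one _))

/-- The extra real coordinate makes the affine condition "`T` extends `T₀`" homogeneous. -/
def scaledExtensionValues (T₀ : E₀ →ₗ[ℝ] X) (p : κ → E) : Submodule ℝ (ℝ × (κ → X)) where
  carrier := {v | ∃ T : E →ₗ[ℝ] X, (∀ e : E₀, T e = v.1 • T₀ e) ∧ ∀ k, T (p k) = v.2 k}
  add_mem' := by
    rintro v w ⟨T, hT, hTp⟩ ⟨U, hU, hUp⟩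
    exact ⟨T + U, fun e => by simp [hT, hU, add_smul], fun k => by simp [hTp, hUp]⟩
  zero_mem' := ⟨0, by simp, by simp⟩
  smul_mem' := by
    rintro c v ⟨T, hT, hTp⟩
    exact ⟨c • T, fun e => by simp [hT, smul_smul], fun k => by simp [hTp]⟩

theorem exists_extension_apply_eq_norm_le_of_bidual [Fintype κ] (T₀ : E₀ →ₗ[ℝ] X)
    (S : E →ₗ[ℝ] StrongDual ℝ X →ₗ[ℝ] ℝ) (hS : ∀ (e : E₀) (f : StrongDual ℝ X), S e f = f (T₀ e))
    (p : κ → E) (hp : ∀ k f, S (p k) f ≤ ‖f‖) {Λ : Type*} [Fintype Λ]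
    (f : Λ → StrongDual ℝ X) {r : ℝ} (hr : 1 < r) :
    ∃ T : E →ₗ[ℝ] X, (∀ e : E₀, T e = T₀ e) ∧ (∀ j k, f j (T (p k)) = S (p k) (f j)) ∧
      ∀ k, ‖T (p k)‖ ≤ r := by
  set Z := scaledExtensionValues T₀ p
  set Φ : Z →L[ℝ] ℝ × (κ → Λ → ℝ) :=
    ((ContinuousLinearMap.fst ℝ ℝ (κ → X)).prod (ContinuousLinearMap.pi fun k =>
      ContinuousLinearMap.pi fun j => f j ∘L ContinuousLinearMap.proj k ∘L
        ContinuousLinearMap.snd ℝ ℝ (κ → X))) ∘L Z.subtypeL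
  have hΦ (z : Z) : Φ z = ((z : ℝ × (κ → X)).1, fun k j => f j ((z : ℝ × (κ → X)).2 k)) := rfl
  set c : ℝ × (κ → Λ → ℝ) := (1, fun k j => S (p k) (f j))
  have hc (ℓ : StrongDual ℝ (ℝ × (κ → Λ → ℝ))) : ℓ c ≤ ‖ℓ ∘L Φ‖ := by
    obtain ⟨h, hh, hnorm⟩ := exists_extension_norm_eq Z (ℓ ∘L Φ)
    obtain ⟨T, hT₀, hTf⟩ :=
      exists_extension_apply_eq_of_bidual T₀ S hS (Sum.elim f fun k => h ∘L inrSingle k)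
    -- `T` realises `c` in `Z` and pairs with the components of `h` exactly as `S` does.
    let z : Z := ⟨(1, fun k => T (p k)), T, by simpa using hT₀, fun k => rfl⟩
    have hz : Φ z = c := by
      rw [hΦ]
      congr 2 with k j
      exact hTf (.inl j) (p k)
    calc ℓ c = h (1, 0) + ∑ k, S (p k) (h ∘L inrSingle k) := by
          rw [← hz, ← ContinuousLinearMap.comp_apply, ← hh, h.apply_prod_pi]
          change 1 * h (1, 0) + ∑ k, (h ∘L inrSingle k) (T (p k)) = _
          rw [one_mul]
          exact congrArg _ (Finset.sum_congr rfl fun k _ => hTf (.inr k) (p k))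
      _ ≤ |h (1, 0)| + ∑ k, ‖h ∘L inrSingle k‖ := by
          gcongr with k
          · exact le_abs_self _
          · exact hp k _
      _ ≤ ‖ℓ ∘L Φ‖ := hnorm ▸ h.abs_apply_add_sum_norm_comp_inrSingle_le
  obtain ⟨⟨v, T, hT₀, hTp⟩, hv, hvc⟩ := Φ.exists_norm_le_apply_eq_of_forall_le hc hr
  obtain ⟨hv1 : v.1 = 1, hvf⟩ := Prod.ext_iff.1 hvc
  refine ⟨T, fun e => by simp [hT₀, hv1], fun j k => ?_, fun k => ?_⟩
  · rw [hTp]; exact congrFun (congrFun hvf k) j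
  · rw [hTp]; exact (norm_le_pi_norm _ k).trans ((norm_snd_le v).trans hv)

end Bidual

section Net

variable {E F : Type*} [NormedAddCommGroup E] [NormedSpace ℝ E]
  [NormedAddCommGroup F] [NormedSpace ℝ F] {κ : Type*} {p : κ → E} {δ : ℝ}

theorem ContinuousLinearMap.one_sub_mul_opNorm_le_of_net (T : E →L[ℝ] F)
    (hnet : ∀ e : E, ‖e‖ = 1 → ∃ k, ‖e - p k‖ < δ) (hδ : 0 ≤ δ) {a : ℝ} (ha : 0 ≤ a)
    (hTp : ∀ k, ‖T (p k)‖ ≤ a) : (1 - δ) * ‖T‖ ≤ a := by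
  suffices ‖T‖ ≤ a + ‖T‖ * δ by linarith
  refine T.opNorm_le_of_unit_norm (by positivity) fun e he => ?_
  obtain ⟨k, hk⟩ := hnet e he
  calc ‖T e‖ = ‖T (p k) + T (e - p k)‖ := by rw [← map_add, add_sub_cancel]
    _ ≤ a + ‖T‖ * δ := (norm_add_le _ _).trans
        (add_le_add (hTp k) (T.le_opNorm_of_le hk.le))

theorem ContinuousLinearMap.mul_norm_le_norm_apply_of_net (T : E →L[ℝ] F)
    (hnet : ∀ e : E, ‖e‖ = 1 → ∃ k, ‖e - p k‖ < δ) {b : ℝ} (hTp : ∀ k, b ≤ ‖T (p k)‖) (e : E) :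
    (b - ‖T‖ * δ) * ‖e‖ ≤ ‖T e‖ := by
  have hunit (u : E) (hu : ‖u‖ = 1) : b - ‖T‖ * δ ≤ ‖T u‖ := by
    obtain ⟨k, hk⟩ := hnet u hu
    have : ‖T (p k)‖ ≤ ‖T u‖ + ‖T‖ * δ := by
      calc ‖T (p k)‖ = ‖T u - T (u - p k)‖ := by rw [← map_sub, sub_sub_cancel]
        _ ≤ ‖T u‖ + ‖T‖ * δ := (norm_sub_le _ _).trans
            (add_le_add le_rfl (T.le_opNorm_of_le hk.le))
    linarith [hTp k]
  rcases eq_or_ne e 0 with rfl | he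
  · simp
  have hne : ‖e‖ ≠ 0 := norm_ne_zero_iff.2 he
  have := hunit (‖e‖⁻¹ • e) (by rw [norm_smul, norm_inv, norm_norm, inv_mul_cancel₀ hne])
  rw [map_smul, norm_smul, norm_inv, norm_norm, le_inv_mul_iff₀ (norm_pos_iff.2 he)] at this
  linarith

theorem ContinuousLinearMap.norm_apply_bounds_of_net (T : E →L[ℝ] F)
    (hnet : ∀ e : E, ‖e‖ = 1 → ∃ k, ‖e - p k‖ < δ) {ε : ℝ} (hε : 0 < ε) (hδ : 0 ≤ δ)
    (hδε : 4 * (1 + ε) ^ 2 * δ ≤ ε) (hTp : ∀ k, 1 - δ ≤ ‖T (p k)‖ ∧ ‖T (p k)‖ ≤ 1 + δ) (e : E) :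
    (1 + ε)⁻¹ * ‖e‖ ≤ ‖T e‖ ∧ ‖T e‖ ≤ (1 + ε) * ‖e‖ := by
  have hδ₁ : (2 + ε) * (1 + ε) * δ ≤ ε := by nlinarith
  have hδ₂ : (2 + ε) * δ ≤ ε := by nlinarith
  have hT := T.one_sub_mul_opNorm_le_of_net hnet hδ (by linarith) fun k => (hTp k).2
  have hTε : ‖T‖ ≤ 1 + ε := by
    by_contra! h
    have : (1 - δ) * (1 + ε) < (1 - δ) * ‖T‖ := mul_lt_mul_of_pos_left h (by nlinarith)
    linarith
  have hlow := T.mul_norm_le_norm_apply_of_net hnet (fun k => (hTp k).1) e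
  refine ⟨le_trans ?_ hlow, (T.le_opNorm e).trans (by gcongr)⟩
  gcongr
  rw [inv_le_iff_one_le_mul₀ (by positivity)]
  calc 1 ≤ (1 - (2 + ε) * δ) * (1 + ε) := by nlinarith
    _ ≤ (1 - δ - ‖T‖ * δ) * (1 + ε) := mul_le_mul_of_nonneg_right (by nlinarith) (by positivity)

end Net

theorem exists_finset_sphere_net {E : Type*}
    [NormedAddCommGroup E] [NormedSpace ℝ E] [ProperSpace E] {δ : ℝ} (hδ : 0 < δ) :
    ∃ N : Finset E, (∀ k : N, ‖(k : E)‖ = 1) ∧ ∀ e : E, ‖e‖ = 1 → ∃ k : N, ‖e - k‖ < δ := by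
  obtain ⟨N, hN, hcover⟩ :=
    (isCompact_sphere (0 : E) 1).elim_nhds_subcover _ fun e _ => ball_mem_nhds e hδ
  refine ⟨N, fun k => mem_sphere_zero_iff_norm.1 (hN k k.2), fun e he => ?_⟩
  obtain ⟨k, hk, hek⟩ := mem_iUnion₂.1 (hcover (mem_sphere_zero_iff_norm.2 he))
  exact ⟨⟨k, hk⟩, mem_ball_iff_norm.1 hek⟩

theorem IsOneNorming.exists_lt_abs_apply {Y : Type*} [NormedAddCommGroup Y] [NormedSpace ℝ Y]
    {V : Set (Y →L[ℝ] ℝ)} (hV : IsOneNorming V) {y : Y} {c : ℝ} (hc₀ : 0 ≤ c) (hc : c < ‖y‖) :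
    ∃ v ∈ V, ‖v‖ ≤ 1 ∧ c < |v y| := by
  rw [hV y] at hc
  have hne : {r : ℝ | ∃ v ∈ V, ‖v‖ ≤ 1 ∧ r = |v y|}.Nonempty := by
    by_contra h
    rw [not_nonempty_iff_eq_empty.1 h, Real.sSup_empty] at hc
    linarith
  obtain ⟨_, ⟨v, hv, hv1, rfl⟩, hcv⟩ := exists_lt_of_lt_csSup hne hc
  exact ⟨v, hv, hv1, hcv⟩

theorem IsHahnBanachExtensionOperator.exists_extension_apply_eq_norm_le {Y : Type*}
    [NormedAddCommGroup Y] [NormedSpace ℝ Y] {X : Subspace ℝ Y}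
    {φ : (X →L[ℝ] ℝ) →L[ℝ] (Y →L[ℝ] ℝ)} (hφ : IsHahnBanachExtensionOperator X φ)
    (E : Subspace ℝ Y) {κ : Type*} [Fintype κ] [DecidableEq κ] (p : κ → E)
    (hp : ∀ k, ‖p k‖ ≤ 1) {Λ : Type*} [Fintype Λ] (f : Λ → StrongDual ℝ X) {r : ℝ}
    (hr : 1 < r) :
    ∃ T : E →ₗ[ℝ] X, (∀ e : E, (e : Y) ∈ X → (T e : Y) = e) ∧
      (∀ j k, f j (T (p k)) = φ (f j) (p k)) ∧ ∀ k, ‖T (p k)‖ ≤ r := by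
  obtain ⟨T, hT₀, hTf, hTp⟩ := exists_extension_apply_eq_norm_le_of_bidual
    (E₀ := X.comap E.subtype) (E.subtype.restrict fun _ h => h)
    ((ContinuousLinearMap.coeLM ℝ ∘ₗ (φ : (X →L[ℝ] ℝ) →ₗ[ℝ] (Y →L[ℝ] ℝ))).flip ∘ₗ E.subtype)
    (fun e g => (hφ g).1 ⟨_, e.2⟩) p
    (fun k g => (le_abs_self _).trans <| ((φ g).le_opNorm _).trans <| by
      rw [(hφ g).2]; exact mul_le_of_le_one_right (norm_nonneg g) (hp k))
    f hr
  exact ⟨T, fun e he => congrArg Subtype.val (hT₀ ⟨e, he⟩), hTf, hTp⟩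

theorem strictIdeal_isSuperIdeal_general
    (Y : Type*) [NormedAddCommGroup Y] [NormedSpace ℝ Y]
    (X : Subspace ℝ Y)
    (φ : (X →L[ℝ] ℝ) →L[ℝ] (Y →L[ℝ] ℝ))
    (hφ : IsHahnBanachExtensionOperator X φ)
    (h1n : IsOneNorming (Set.range (fun f => φ f))) :
    IsSuperIdeal X := by
  classical
  intro ε hε E _
  set δ := ε / (4 * (1 + ε) ^ 2)
  have hδ : 0 < δ := by positivity
  have hδε : 4 * (1 + ε) ^ 2 * δ = ε := mul_div_cancel₀ _ (by positivity)
  obtain ⟨N, hunit, hnet⟩ := exists_finset_sphere_net (E := E) hδ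
  have hnorming (k : N) : ∃ g : X →L[ℝ] ℝ, ‖φ g‖ ≤ 1 ∧ 1 - δ < |φ g k| := by
    obtain ⟨_, ⟨g, rfl⟩, hg⟩ := h1n.exists_lt_abs_apply (y := ((k : E) : Y)) (c := 1 - δ)
      (by nlinarith) (lt_of_lt_of_eq (by linarith) (hunit k).symm)
    exact ⟨g, hg⟩
  choose f hf1 hf using hnorming
  obtain ⟨T, hT₀, hTf, hTp⟩ := hφ.exists_extension_apply_eq_norm_le E (fun k : N => (k : E))
    (fun k => (hunit k).le) f (r := 1 + δ) (by linarith)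
  refine ⟨T, hT₀, (LinearMap.toContinuousLinearMap T).norm_apply_bounds_of_net hnet hε hδ.le
    hδε.le fun k => ⟨?_, hTp k⟩⟩
  calc 1 - δ ≤ |f k (T k)| := (hTf k k ▸ hf k).le
    _ ≤ ‖T k‖ := (f k).le_opNorm (T k) |>.trans (mul_le_of_le_one_left (norm_nonneg _)
        ((hφ (f k)).2 ▸ hf1 k))

theorem strictIdeal_isSuperIdeal
    (Y : Type*) [NormedAddCommGroup Y] [NormedSpace ℝ Y] [CompleteSpace Y]
    (X : Subspace ℝ Y) (hXc : IsClosed (X : Set Y))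
    (φ : (X →L[ℝ] ℝ) →L[ℝ] (Y →L[ℝ] ℝ))
    (hφ : IsHahnBanachExtensionOperator X φ)
    (h1n : IsOneNorming (Set.range (fun f => φ f))) :
    IsSuperIdeal X :=
  strictIdeal_isSuperIdeal_general Y X φ hφ h1n
end

section
/- Let c₀ denote the Banach space of real sequences converging to 0 with the supremum norm, and let X = {(aₙ)ₙ ∈ c₀ : a₀ = 0} be the kernel of the first coordinate functional. Then X is a super-ideal in c₀. -/
universe u v

open Metric Set

/-! The evaluation functionals `e ↦ e n`, restricted to a finite-dimensional subspace `E ⊆ c₀`,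
tend to zero pointwise and hence, `E` being finite-dimensional, in norm. So for `δ > 0` there is a
coordinate `M ≠ 0` with `|e M| ≤ δ‖e‖` on `E`. Moving the zeroth coordinate of `e` onto coordinate
`M` gives a vector of `X`, fixes the vectors of `X`, and changes the norm by at most `|e M|`;
with `δ = ε / (1 + ε)` this is the required `(1 + ε)`-isomorphism. -/

open Filter Topology ZeroAtInfty

theorem ContinuousLinearMap.tendsto_opNorm_zero_of_tendsto_apply {𝕜 E F ι : Type*}
    [NontriviallyNormedField 𝕜] [CompleteSpace 𝕜] [NormedAddCommGroup E] [NormedSpace 𝕜 E]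
    [FiniteDimensional 𝕜 E] [NormedAddCommGroup F] [NormedSpace 𝕜 F] {l : Filter ι}
    {u : ι → E →L[𝕜] F} (h : ∀ e, Tendsto (fun i ↦ u i e) l (𝓝 0)) :
    Tendsto (fun i ↦ ‖u i‖) l (𝓝 0) := by
  let b := Module.finBasis 𝕜 E
  obtain ⟨C, -, hC⟩ := b.exists_opNorm_le (F := F)
  have hsum : Tendsto (fun i ↦ C * ∑ k, ‖u i (b k)‖) l (𝓝 0) := by
    simpa using ((tendsto_finsetSum _ fun k _ ↦ (h (b k)).norm).const_mul C)
  refine squeeze_zero (fun _ ↦ norm_nonneg _) (fun i ↦ hC (by positivity) fun k ↦ ?_) hsum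
  exact Finset.single_le_sum (f := fun k ↦ ‖u i (b k)‖) (fun _ _ ↦ norm_nonneg _)
    (Finset.mem_univ k)

namespace ZeroAtInftyContinuousMap

section Norm

variable {α β : Type*} [TopologicalSpace α] [NormedAddCommGroup β]

theorem norm_apply_le (f : C₀(α, β)) (x : α) : ‖f x‖ ≤ ‖f‖ :=
  norm_toBCF_eq_norm (f := f) ▸ f.toBCF.norm_coe_le_norm x

theorem norm_le_of_forall_norm_apply_le {f : C₀(α, β)} {C : ℝ} (hC : 0 ≤ C)
    (h : ∀ x, ‖f x‖ ≤ C) : ‖f‖ ≤ C :=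
  norm_toBCF_eq_norm (f := f) ▸ (BoundedContinuousFunction.norm_le hC).2 h

variable (𝕜 : Type*) [NormedField 𝕜] [NormedSpace 𝕜 β]

noncomputable def evalCLM (x : α) : C₀(α, β) →L[𝕜] β :=
  LinearMap.mkContinuous
    { toFun := fun f ↦ f x, map_add' := fun _ _ ↦ rfl, map_smul' := fun _ _ ↦ rfl } 1
    fun f ↦ by simpa using norm_apply_le f x

end Norm

theorem eventually_cocompact_norm_apply_le {α β 𝕜 : Type*} [TopologicalSpace α]
    [NontriviallyNormedField 𝕜] [CompleteSpace 𝕜] [NormedAddCommGroup β] [NormedSpace 𝕜 β]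
    (E : Submodule 𝕜 C₀(α, β)) [FiniteDimensional 𝕜 E] {δ : ℝ} (hδ : 0 < δ) :
    ∀ᶠ x in cocompact α, ∀ e : E, ‖(e : C₀(α, β)) x‖ ≤ δ * ‖e‖ := by
  have hnorm := ContinuousLinearMap.tendsto_opNorm_zero_of_tendsto_apply
    (u := fun x ↦ (evalCLM 𝕜 x).comp E.subtypeL) fun e ↦ (e : C₀(α, β)).zero_at_infty'
  filter_upwards [hnorm.eventually (ge_mem_nhds hδ)] with x hx e
  exact ((evalCLM 𝕜 x).comp E.subtypeL).le_of_opNorm_le hx e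

section MoveCoord

variable {α β 𝕜 : Type*} [TopologicalSpace α] [DiscreteTopology α] [DecidableEq α]
  [NormedAddCommGroup β] [NormedField 𝕜] [NormedSpace 𝕜 β]

variable (𝕜)

noncomputable def moveCoord (i j : α) : C₀(α, β) →ₗ[𝕜] C₀(α, β) where
  toFun f :=
    { toFun := fun x ↦ if x = i then 0 else if x = j then f j + f i else f x
      continuous_toFun := continuous_of_discreteTopology
      zero_at_infty' := by
        refine f.zero_at_infty'.congr' ?_
        rw [cocompact_eq_cofinite]
        filter_upwards [(Set.toFinite {i, j}).compl_mem_cofinite] with x hx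
        simp only [Set.mem_compl_iff, Set.mem_insert_iff, Set.mem_singleton_iff, not_or] at hx
        simp [hx.1, hx.2] }
  map_add' f g := by
    ext x
    simp only [coe_mk, coe_add, Pi.add_apply]
    split_ifs <;> abel
  map_smul' c f := by
    ext x
    simp only [coe_mk, coe_smul, Pi.smul_apply, RingHom.id_apply]
    split_ifs <;> simp [smul_add]

theorem moveCoord_apply (i j : α) (f : C₀(α, β)) (x : α) :
    moveCoord 𝕜 i j f x = if x = i then 0 else if x = j then f j + f i else f x := rfl

theorem moveCoord_apply_left (i j : α) (f : C₀(α, β)) : moveCoord 𝕜 i j f i = 0 := by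
  simp [moveCoord_apply]

theorem moveCoord_eq_self {i : α} (j : α) {f : C₀(α, β)} (hf : f i = 0) :
    moveCoord 𝕜 i j f = f := by
  ext x
  rw [moveCoord_apply]
  split_ifs with hi hj
  · rw [hi, hf]
  · rw [hj, hf, add_zero]
  · rfl

theorem norm_moveCoord_le (i j : α) (f : C₀(α, β)) :
    ‖moveCoord 𝕜 i j f‖ ≤ ‖f‖ + ‖f j‖ := by
  refine norm_le_of_forall_norm_apply_le (by positivity) fun x ↦ ?_
  rw [moveCoord_apply]
  split_ifs
  · simp [add_nonneg]
  · exact (norm_add_le _ _).trans (by rw [add_comm]; gcongr; exact norm_apply_le f i)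
  · exact (norm_apply_le f x).trans (le_add_of_nonneg_right (norm_nonneg _))

theorem norm_le_norm_moveCoord_add {i j : α} (hij : i ≠ j) (f : C₀(α, β)) :
    ‖f‖ ≤ ‖moveCoord 𝕜 i j f‖ + ‖f j‖ := by
  set g := moveCoord 𝕜 i j f
  refine norm_le_of_forall_norm_apply_le (by positivity) fun x ↦ ?_
  by_cases hi : x = i
  · have hgj : g j = f j + f i := by simp [g, moveCoord_apply, hij.symm]
    calc ‖f x‖ = ‖g j - f j‖ := by rw [hi, hgj, add_sub_cancel_left]
      _ ≤ ‖g‖ + ‖f j‖ := (norm_sub_le _ _).trans (by gcongr; exact norm_apply_le g j)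
  by_cases hj : x = j
  · exact hj ▸ le_add_of_nonneg_left (norm_nonneg _)
  · have hgx : g x = f x := by simp [g, moveCoord_apply, hi, hj]
    exact hgx ▸ (norm_apply_le g x).trans (le_add_of_nonneg_right (norm_nonneg _))

end MoveCoord

end ZeroAtInftyContinuousMap

open ZeroAtInftyContinuousMap in
theorem ker_firstCoord_superIdeal_c0
    (X : Subspace ℝ (ZeroAtInftyContinuousMap ℕ ℝ))
    (hX : ∀ f : ZeroAtInftyContinuousMap ℕ ℝ, f ∈ X ↔ f 0 = 0) :
    IsSuperIdeal X := by
  intro ε hε E _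
  set δ := ε / (1 + ε)
  have hδ : 0 < δ := by positivity
  obtain ⟨M, hM, hM0⟩ : ∃ M : ℕ, (∀ e : E, ‖(e : C₀(ℕ, ℝ)) M‖ ≤ δ * ‖e‖) ∧ M ≠ 0 := by
    have hfar := eventually_cocompact_norm_apply_le E hδ
    rw [cocompact_eq_cofinite] at hfar
    exact (hfar.and (eventually_cofinite_ne 0)).exists
  have hmem (e : E) : moveCoord ℝ 0 M (e : C₀(ℕ, ℝ)) ∈ X := (hX _).2 (moveCoord_apply_left ℝ 0 M _)
  refine ⟨((moveCoord ℝ 0 M).comp E.subtype).codRestrict X hmem,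
    fun e he ↦ moveCoord_eq_self ℝ M ((hX _).1 he), fun e ↦ ⟨?_, ?_⟩⟩
  · have hlower := norm_le_norm_moveCoord_add ℝ hM0.symm (e : C₀(ℕ, ℝ))
    have hδε : (1 + ε)⁻¹ = 1 - δ := by simp only [δ]; field_simp; ring
    change (1 + ε)⁻¹ * ‖e‖ ≤ ‖moveCoord ℝ 0 M (e : C₀(ℕ, ℝ))‖
    rw [hδε, sub_mul, one_mul]
    linarith [hM e, Submodule.coe_norm e]
  · have hupper := norm_moveCoord_le ℝ 0 M (e : C₀(ℕ, ℝ))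
    have hδε : δ ≤ ε := div_le_self hε.le (by linarith)
    change ‖moveCoord ℝ 0 M (e : C₀(ℕ, ℝ))‖ ≤ (1 + ε) * ‖e‖
    nlinarith [hM e, norm_nonneg e, Submodule.coe_norm e]
end

section
/- Let c₀ denote the Banach space of real sequences converging to 0 with the supremum norm, and let X = {(aₙ)ₙ ∈ c₀ : a₀ = 0} be the kernel of the first coordinate functional. Then X is not a strict ideal in c₀: for every Hahn-Banach extension operator φ : X* → c₀*, the range of φ is not 1-norming for c₀. -/
universe u v

open Metric Set

/-!
Write `e₀` for the first unit vector of `c₀`. For `x ∈ X` and `|t| ≤ ‖x‖` we have `‖x + t e₀‖ ≤ ‖x‖`,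
since adding `t e₀` only changes the vanishing first coordinate. If `g` is a norm-preserving extension
of `f ∈ X*`, testing `g` on `x ± ‖x‖ e₀` gives `|f x| + |g e₀| ‖x‖ ≤ ‖g‖ ‖x‖`, so
`‖g‖ = ‖f‖ ≤ ‖g‖ - |g e₀|` and `g e₀ = 0`. Thus every functional in the range of a Hahn-Banach
extension operator vanishes at `e₀ ≠ 0`, and the range cannot norm `e₀`.
-/

open Filter ZeroAtInfty

namespace ZeroAtInftyContinuousMap

variable {α : Type*} [TopologicalSpace α]

theorem norm_le {f : C₀(α, ℝ)} {C : ℝ} (hC : 0 ≤ C) : ‖f‖ ≤ C ↔ ∀ a, ‖f a‖ ≤ C :=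
  BoundedContinuousFunction.norm_le (f := f.toBCF) hC

theorem norm_apply_le_norm (f : C₀(α, ℝ)) (a : α) : ‖f a‖ ≤ ‖f‖ :=
  f.toBCF.norm_coe_le_norm a

variable [DiscreteTopology α] [DecidableEq α]

noncomputable def single (i : α) : C₀(α, ℝ) where
  toFun := Pi.single i (1 : ℝ)
  continuous_toFun := continuous_of_discreteTopology
  zero_at_infty' := by
    rw [cocompact_eq_cofinite]
    refine tendsto_const_nhds.congr' ?_
    filter_upwards [eventually_cofinite_ne i] with a ha
    exact (Pi.single_eq_of_ne (M := fun _ => ℝ) ha 1).symm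

@[simp] theorem single_apply (i a : α) : single i a = Pi.single (M := fun _ => ℝ) i 1 a := rfl

theorem single_ne_zero (i : α) : single i ≠ 0 := fun h => by
  simpa using congr($h i)

theorem norm_single_le (i : α) : ‖single i‖ ≤ 1 := by
  refine (norm_le zero_le_one).2 fun a => ?_
  rcases eq_or_ne a i with rfl | ha
  · simp
  · simp [Pi.single_eq_of_ne ha]

theorem norm_add_smul_single_le {f : C₀(α, ℝ)} {i : α} (hf : f i = 0) {t : ℝ} (ht : |t| ≤ ‖f‖) :
    ‖f + t • single i‖ ≤ ‖f‖ := by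
  refine (norm_le (norm_nonneg f)).2 fun a => ?_
  rcases eq_or_ne a i with rfl | ha
  · simpa [hf] using ht
  · simpa [Pi.single_eq_of_ne ha] using f.norm_apply_le_norm a

end ZeroAtInftyContinuousMap

theorem abs_add_abs_mul_le_of_forall_abs_add_mul_le {a c r M : ℝ} (hr : 0 ≤ r)
    (h : ∀ t, |t| ≤ r → |a + t * c| ≤ M) : |a| + |c| * r ≤ M := by
  have hplus := abs_le.1 (h r (abs_of_nonneg hr).le)
  have hminus := abs_le.1 (h (-r) (by rw [abs_neg, abs_of_nonneg hr]))
  rcases abs_cases a with ⟨ha, -⟩ | ⟨ha, -⟩ <;> rcases abs_cases c with ⟨hc, -⟩ | ⟨hc, -⟩ <;>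
    rw [ha, hc] <;> linarith

section Extension

variable {Y : Type*} [NormedAddCommGroup Y] [NormedSpace ℝ Y] {X : Subspace ℝ Y} {e : Y}

theorem ContinuousLinearMap.apply_eq_zero_of_norm_le_norm_comp_subtypeL (he : ‖e‖ ≤ 1)
    (hXe : ∀ x ∈ X, ∀ t : ℝ, |t| ≤ ‖x‖ → ‖x + t • e‖ ≤ ‖x‖) {g : Y →L[ℝ] ℝ}
    (hg : ‖g‖ ≤ ‖g ∘L X.subtypeL‖) : g e = 0 := by
  have hge : |g e| ≤ ‖g‖ := by
    simpa using g.le_opNorm_of_le he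
  have hrestrict : ‖g ∘L X.subtypeL‖ ≤ ‖g‖ - |g e| := by
    refine ContinuousLinearMap.opNorm_le_bound _ (sub_nonneg.2 hge) fun x => ?_
    have hsum : |g x| + |g e| * ‖x‖ ≤ ‖g‖ * ‖x‖ := by
      refine abs_add_abs_mul_le_of_forall_abs_add_mul_le (norm_nonneg x) fun t ht => ?_
      calc |g x + t * g e| = ‖g (x + t • e)‖ := by simp
        _ ≤ ‖g‖ * ‖(x : Y) + t • e‖ := g.le_opNorm _
        _ ≤ ‖g‖ * ‖x‖ := by gcongr; exact hXe x x.2 t ht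
    simp only [ContinuousLinearMap.comp_apply, Submodule.subtypeL_apply, Real.norm_eq_abs]
    linarith
  exact abs_eq_zero.1 (by linarith [abs_nonneg (g e)])

theorem IsHahnBanachExtensionOperator.apply_apply_eq_zero
    {φ : (X →L[ℝ] ℝ) →L[ℝ] (Y →L[ℝ] ℝ)} (hφ : IsHahnBanachExtensionOperator X φ)
    (he : ‖e‖ ≤ 1) (hXe : ∀ x ∈ X, ∀ t : ℝ, |t| ≤ ‖x‖ → ‖x + t • e‖ ≤ ‖x‖)
    (f : X →L[ℝ] ℝ) : φ f e = 0 := by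
  obtain ⟨hext, hnorm⟩ := hφ f
  have hcomp : φ f ∘L X.subtypeL = f := ContinuousLinearMap.ext hext
  exact (φ f).apply_eq_zero_of_norm_le_norm_comp_subtypeL he hXe (by rw [hcomp, hnorm])

theorem not_isOneNorming_of_forall_apply_eq_zero {V : Set (Y →L[ℝ] ℝ)} (he : e ≠ 0)
    (hV : ∀ v ∈ V, v e = 0) : ¬ IsOneNorming V := fun hnorming => by
  have hle : ‖e‖ ≤ 0 := by
    rw [hnorming e]
    refine Real.sSup_nonpos fun r ⟨v, hv, _, hr⟩ => ?_
    simp [hr, hV v hv]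
  exact he (norm_le_zero_iff.1 hle)

end Extension

theorem ker_firstCoord_not_strictIdeal_c0
    (X : Subspace ℝ (ZeroAtInftyContinuousMap ℕ ℝ))
    (hX : ∀ f : ZeroAtInftyContinuousMap ℕ ℝ, f ∈ X ↔ f 0 = 0) :
    ∀ φ, IsHahnBanachExtensionOperator X φ →
        ¬ IsOneNorming (Set.range (fun f => φ f)) := by
  open ZeroAtInftyContinuousMap in
  intro φ hφ
  refine not_isOneNorming_of_forall_apply_eq_zero (single_ne_zero 0) ?_
  rintro _ ⟨f, rfl⟩
  exact hφ.apply_apply_eq_zero (norm_single_le 0)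
    (fun x hx _ ht => norm_add_smul_single_le ((hX x).1 hx) ht) f
end

section
/- Let X be a closed subspace of a Banach space Y such that X is a super-ideal in Y. If Y has the strong diameter 2 property (every finite convex combination of slices of the closed unit ball B_Y has diameter 2), then X has the strong diameter 2 property. -/
universe u v

open Metric Set

/-!
Extend each functional `f i` defining a slice of `B_X` to some `G i ∈ Y*` of the same norm, in
such a way that on any finite subset of `Y` we have `f i ∘ T ≈ G i` for a single almost isometry
`T` into `X`; this needs a weak*-compactness argument. Points of the `G i`-slices of `B_Y` whose
convex combinations are almost 2 apart are then carried by `(1 + η)⁻¹ • T` into the `f i`-slices of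
`B_X`, and their convex combinations stay almost 2 apart.
-/

open Filter Topology

section WeakStarLimits

variable {Y : Type*} [NormedAddCommGroup Y] [NormedSpace ℝ Y] {α : Type*}

/-- Banach–Alaoglu, in the form of pointwise limits along an ultrafilter. -/
lemma exists_forall_tendsto_apply_of_eventually_norm_le (l : Ultrafilter α)
    {H : α → StrongDual ℝ Y} {R : ℝ} (hH : ∀ᶠ a in l, ‖H a‖ ≤ R) :
    ∃ G : StrongDual ℝ Y, ∀ y, Tendsto (fun a => H a y) l (𝓝 (G y)) := by
  obtain ⟨G, -, hG⟩ := (WeakDual.isCompact_closedBall (0 : StrongDual ℝ Y) R).ultrafilter_le_nhds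
    (l.map (StrongDual.toWeakDual ∘ H))
    (le_principal_iff.mpr <| hH.mono fun a ha => by simpa using ha)
  exact ⟨WeakDual.toStrongDual G, tendsto_iff_forall_eval_tendsto_topDualPairing.mp hG⟩

lemma norm_le_of_tendsto_apply {l : Filter α} [l.NeBot] {H : α → StrongDual ℝ Y}
    {G : StrongDual ℝ Y} {C : α → ℝ} {c : ℝ} (hG : ∀ y, Tendsto (fun a => H a y) l (𝓝 (G y)))
    (hC : Tendsto C l (𝓝 c)) (hH : ∀ a, ‖H a‖ ≤ C a) : ‖G‖ ≤ c := by
  have hc : 0 ≤ c := ge_of_tendsto' hC fun a => (norm_nonneg _).trans (hH a)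
  refine G.opNorm_le_bound hc fun y => ?_
  exact le_of_tendsto_of_tendsto' (hG y).norm (hC.mul_const ‖y‖) fun a =>
    (H a).le_of_opNorm_le (hH a) y

end WeakStarLimits

namespace IsSuperIdeal

variable {Y : Type*} [NormedAddCommGroup Y] [NormedSpace ℝ Y] {X : Subspace ℝ Y}
  (hX : IsSuperIdeal X) {ι : Type*} (f : ι → StrongDual ℝ X)
include hX

lemma exists_extension_comp (P : Finset Y) {ε : ℝ} (hε : 0 < ε) :
    ∃ (T : Submodule.span ℝ (P : Set Y) →ₗ[ℝ] X) (H : ι → StrongDual ℝ Y),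
      (∀ e : Submodule.span ℝ (P : Set Y), (e : Y) ∈ X → (T e : Y) = e) ∧
      (∀ e, (1 + ε)⁻¹ * ‖e‖ ≤ ‖T e‖ ∧ ‖T e‖ ≤ (1 + ε) * ‖e‖) ∧
      (∀ i (e : Submodule.span ℝ (P : Set Y)), H i e = f i (T e)) ∧
      ∀ i, ‖H i‖ ≤ (1 + ε) * ‖f i‖ := by
  obtain ⟨T, hTX, hT⟩ := hX ε hε _ (FiniteDimensional.span_finset ℝ P)
  have hfT (i) (e : Submodule.span ℝ (P : Set Y)) : ‖f i (T e)‖ ≤ ((1 + ε) * ‖f i‖) * ‖e‖ :=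
    calc ‖f i (T e)‖ ≤ ‖f i‖ * ‖T e‖ := (f i).le_opNorm _
      _ ≤ ‖f i‖ * ((1 + ε) * ‖e‖) := by gcongr; exact (hT e).2
      _ = ((1 + ε) * ‖f i‖) * ‖e‖ := by ring
  choose H hH hHn using fun i => exists_extension_norm_eq _
    (((f i : X →ₗ[ℝ] ℝ).comp T).mkContinuous _ (hfT i))
  refine ⟨T, H, hTX, hT, fun i e => hH i e, fun i => ?_⟩
  rw [hHn]
  exact LinearMap.mkContinuous_norm_le _ (by positivity) _

/-- `G i` is the weak*-limit of Hahn–Banach extensions of `f i ∘ T`, along an ultrafilter on the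
pairs `(P, k)`, where `T : span P → X` has distortion `1 / (k + 1)`. -/
theorem exists_extension_almost_compatible [Finite ι] :
    ∃ G : ι → StrongDual ℝ Y, (∀ i (x : X), G i x = f i x) ∧ (∀ i, ‖G i‖ = ‖f i‖) ∧
      ∀ (P : Finset Y) {η : ℝ}, 0 < η → ∃ (E : Subspace ℝ Y) (T : E →ₗ[ℝ] X),
        (P : Set Y) ⊆ E ∧ (∀ e, (1 + η)⁻¹ * ‖e‖ ≤ ‖T e‖ ∧ ‖T e‖ ≤ (1 + η) * ‖e‖) ∧
        ∀ i (e : E), (e : Y) ∈ P → |f i (T e) - G i e| < η := by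
  classical
  choose T H hTX hT hHT hH using fun α : Finset Y × ℕ =>
    hX.exists_extension_comp f α.1 (ε := 1 / (α.2 + 1)) Nat.one_div_pos_of_nat
  obtain ⟨𝒰, h𝒰⟩ := Ultrafilter.exists_le (atTop : Filter (Finset Y × ℕ))
  have hε : Tendsto (fun α : Finset Y × ℕ => (1 : ℝ) / (α.2 + 1)) 𝒰 (𝓝 0) :=
    (tendsto_one_div_add_atTop_nhds_zero_nat.comp
      (tendsto_atTop_atTop_of_monotone monotone_snd fun n => ⟨(∅, n), le_rfl⟩)).mono_left h𝒰
  have hHbound (α : Finset Y × ℕ) (i : ι) : ‖H α i‖ ≤ 2 * ‖f i‖ := by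
    have : (1 : ℝ) / (α.2 + 1) ≤ 1 := by rw [div_le_one₀ (by positivity)]; simp
    exact (hH α i).trans (by gcongr; linarith)
  choose G hG using fun i =>
    exists_forall_tendsto_apply_of_eventually_norm_le 𝒰 (.of_forall (hHbound · i))
  have hnear (P : Finset Y) : ∀ᶠ α : Finset Y × ℕ in 𝒰, P ≤ α.1 :=
    Eventually.mono (h𝒰 (eventually_ge_atTop (P, 0))) fun _ h => h.1
  have hGX (i) (x : X) : G i x = f i x := by
    refine tendsto_nhds_unique (hG i x) (tendsto_const_nhds.congr' ?_)
    filter_upwards [hnear {(x : Y)}] with α hα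
    have hx : (x : Y) ∈ Submodule.span ℝ (α.1 : Set Y) :=
      Submodule.subset_span (hα (Finset.mem_singleton_self _))
    rw [hHT α i ⟨x, hx⟩, show T α ⟨x, hx⟩ = x from Subtype.ext (hTX α ⟨x, hx⟩ x.2)]
  refine ⟨G, hGX, fun i => le_antisymm ?_ ?_, fun P η hη => ?_⟩
  · exact norm_le_of_tendsto_apply (hG i) (by simpa using (hε.const_add 1).mul_const ‖f i‖)
      (hH · i)
  · exact (f i).opNorm_le_bound (norm_nonneg _) fun x => hGX i x ▸ (G i).le_opNorm x
  have hconv : ∀ᶠ α in 𝒰, ∀ i, ∀ y ∈ P, |H α i y - G i y| < η := by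
    simp only [eventually_all, eventually_all_finset]
    exact fun i y _ => (hG i y).eventually (Metric.ball_mem_nhds _ hη)
  obtain ⟨α, hPα, hεα, hα⟩ :=
    ((hnear P).and ((hε.eventually (ge_mem_nhds hη)).and hconv)).exists
  refine ⟨_, T α, (Finset.coe_subset.mpr hPα).trans Submodule.subset_span,
    fun e => ⟨?_, ?_⟩, fun i e he => ?_⟩
  · calc (1 + η)⁻¹ * ‖e‖ ≤ (1 + 1 / ((α.2 : ℝ) + 1))⁻¹ * ‖e‖ := by gcongr
      _ ≤ ‖T α e‖ := (hT α e).1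
  · calc ‖T α e‖ ≤ (1 + 1 / ((α.2 : ℝ) + 1)) * ‖e‖ := (hT α e).2
      _ ≤ (1 + η) * ‖e‖ := by gcongr
  · simpa [hHT] using hα i e he

end IsSuperIdeal

section StrongDiameterTwo

variable {Z : Type*} [NormedAddCommGroup Z]

lemma diam_eq_two_of_subset_closedBall {D : Set Z} (hD : D ⊆ closedBall 0 1)
    (hfar : ∀ δ > 0, ∃ p ∈ D, ∃ q ∈ D, 2 - δ < dist p q) : diam D = 2 := by
  have hDb : Bornology.IsBounded D := isBounded_closedBall.subset hD
  refine le_antisymm ((diam_mono hD isBounded_closedBall).trans ?_) ?_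
  · simpa using diam_closedBall (x := (0 : Z)) zero_le_one
  refine le_of_forall_pos_lt_add fun δ hδ => ?_
  obtain ⟨p, hp, q, hq, hpq⟩ := hfar δ hδ
  linarith [dist_le_diam_of_mem hDb hp hq]

variable [NormedSpace ℝ Z]

def slice (f : StrongDual ℝ Z) (ε : ℝ) : Set Z :=
  {z | z ∈ closedBall (0 : Z) 1 ∧ 1 - ε < f z}

theorem hasStrongDiameterTwoProperty_iff : HasStrongDiameterTwoProperty Z ↔
    ∀ n, 0 < n → ∀ (f : Fin n → StrongDual ℝ Z), (∀ i, ‖f i‖ = 1) →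
      ∀ (ε : Fin n → ℝ), (∀ i, 0 < ε i) → ∀ (lam : Fin n → ℝ), (∀ i, 0 ≤ lam i) →
        ∑ i, lam i = 1 → ∀ δ > 0, ∃ x x' : Fin n → Z,
          (∀ i, x i ∈ slice (f i) (ε i)) ∧ (∀ i, x' i ∈ slice (f i) (ε i)) ∧
          2 - δ < dist (∑ i, lam i • x i) (∑ i, lam i • x' i) := by
  constructor
  · intro hZ n hn f hf ε hε lam hlam hsum δ hδ
    have hdiam := hZ n hn (fun i => slice (f i) (ε i)) lam (fun i => ⟨f i, ε i, hf i, hε i, rfl⟩)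
      hlam hsum
    by_contra! h
    have : diam {z : Z | ∃ x : Fin n → Z, (∀ i, x i ∈ slice (f i) (ε i)) ∧
        z = ∑ i, lam i • x i} ≤ max (2 - δ) 0 := by
      refine diam_le_of_forall_dist_le (le_max_right _ _) ?_
      rintro _ ⟨x, hx, rfl⟩ _ ⟨x', hx', rfl⟩
      exact (h x x' hx hx').trans (le_max_left _ _)
    linarith [max_lt (by linarith : 2 - δ < 2) two_pos]
  · intro h n hn S lam hS hlam hsum
    choose f ε hf hε hS using hS
    obtain rfl : S = fun i => slice (f i) (ε i) := funext hS
    refine diam_eq_two_of_subset_closedBall ?_ fun δ hδ => ?_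
    · rintro _ ⟨x, hx, rfl⟩
      exact (convex_closedBall 0 1).sum_mem (fun i _ => hlam i) hsum fun i _ => (hx i).1
    · obtain ⟨x, x', hx, hx', hd⟩ := h n hn f hf ε hε lam hlam hsum δ hδ
      exact ⟨_, ⟨x, hx, rfl⟩, _, ⟨x', hx', rfl⟩, hd⟩

end StrongDiameterTwo

section AlmostIsometry

variable {E F : Type*} [NormedAddCommGroup E] [NormedSpace ℝ E] [NormedAddCommGroup F]
  [NormedSpace ℝ F] {T : E →ₗ[ℝ] F} {η : ℝ} (hη : 0 < η)
  (hT : ∀ e, (1 + η)⁻¹ * ‖e‖ ≤ ‖T e‖ ∧ ‖T e‖ ≤ (1 + η) * ‖e‖)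
include hη hT

lemma norm_inv_smul_apply_le (e : E) : ‖(1 + η)⁻¹ • T e‖ ≤ ‖e‖ := by
  rw [norm_smul, Real.norm_of_nonneg (by positivity), inv_mul_le_iff₀ (by positivity)]
  exact (hT e).2

lemma le_dist_inv_smul_apply (e e' : E) :
    (1 + η)⁻¹ * ((1 + η)⁻¹ * dist e e') ≤ dist ((1 + η)⁻¹ • T e) ((1 + η)⁻¹ • T e') := by
  rw [dist_eq_norm, dist_eq_norm, ← smul_sub, ← map_sub, norm_smul,
    Real.norm_of_nonneg (by positivity)]
  gcongr
  exact (hT _).1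

lemma inv_smul_apply_mem_slice {f : StrongDual ℝ F} {ε : ℝ}
    (hηε : 1 - ε < (1 + η)⁻¹ * (1 - 2 * η)) {e : E} (he : ‖e‖ ≤ 1) {a : ℝ} (ha : 1 - η < a)
    (hfa : |f (T e) - a| < η) : (1 + η)⁻¹ • T e ∈ slice f ε := by
  refine ⟨mem_closedBall_zero_iff.mpr ((norm_inv_smul_apply_le hη hT e).trans he), ?_⟩
  rw [map_smul, smul_eq_mul]
  have : 1 - 2 * η < f (T e) := by linarith [(abs_lt.mp hfa).1]
  exact hηε.trans_le (by gcongr)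

end AlmostIsometry

theorem superIdeal_strongDiameterTwoProperty_general
    (Y : Type*) [NormedAddCommGroup Y] [NormedSpace ℝ Y]
    (X : Subspace ℝ Y) (hX : IsSuperIdeal X)
    (hY : HasStrongDiameterTwoProperty Y) :
    HasStrongDiameterTwoProperty X := by
  classical
  rw [hasStrongDiameterTwoProperty_iff] at hY ⊢
  intro n hn f hf ε hε lam hlam hsum δ hδ
  obtain ⟨G, -, hGf, hG⟩ := hX.exists_extension_almost_compatible f
  have hsmall : ∀ᶠ η in 𝓝 (0 : ℝ), (∀ i, 1 - ε i < (1 + η)⁻¹ * (1 - 2 * η)) ∧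
      2 - δ < (1 + η)⁻¹ * ((1 + η)⁻¹ * (2 - η)) := by
    refine (eventually_all.2 fun i => ?_).and ?_ <;>
      refine ContinuousAt.eventually_lt (by fun_prop) (by fun_prop (disch := norm_num)) ?_ <;>
      norm_num [hε, hδ]
  obtain ⟨η, ⟨hηε, hηδ⟩, hη : 0 < η⟩ :=
    ((hsmall.filter_mono nhdsWithin_le_nhds).and (self_mem_nhdsWithin (s := Ioi 0))).exists
  obtain ⟨y, y', hy, hy', hyy'⟩ :=
    hY n hn G (fun i => (hGf i).trans (hf i)) (fun _ => η) (fun _ => hη) lam hlam hsum η hη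
  obtain ⟨E, T, hPE, hT, hfT⟩ := hG (Finset.univ.image y ∪ Finset.univ.image y') hη
  lift y to Fin n → E using fun i => hPE (by simp)
  lift y' to Fin n → E using fun i => hPE (by simp)
  refine ⟨fun i => (1 + η)⁻¹ • T (y i), fun i => (1 + η)⁻¹ • T (y' i), fun i => ?_, fun i => ?_, ?_⟩
  · exact inv_smul_apply_mem_slice hη hT (hηε i) (mem_closedBall_zero_iff.mp (hy i).1) (hy i).2
      (hfT i _ (by simp))
  · exact inv_smul_apply_mem_slice hη hT (hηε i) (mem_closedBall_zero_iff.mp (hy' i).1) (hy' i).2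
      (hfT i _ (by simp))
  calc 2 - δ < (1 + η)⁻¹ * ((1 + η)⁻¹ * (2 - η)) := hηδ
    _ ≤ (1 + η)⁻¹ * ((1 + η)⁻¹ * dist (∑ i, lam i • y i) (∑ i, lam i • y' i)) := by
      gcongr
      simpa [Subtype.dist_eq] using hyy'.le
    _ ≤ _ := le_dist_inv_smul_apply hη hT _ _
    _ = _ := by simp only [map_sum, map_smul, Finset.smul_sum, smul_comm (1 + η)⁻¹ (lam _)]

theorem superIdeal_strongDiameterTwoProperty
    (Y : Type*) [NormedAddCommGroup Y] [NormedSpace ℝ Y] [CompleteSpace Y]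
    (X : Subspace ℝ Y) (hXc : IsClosed (X : Set Y)) (hX : IsSuperIdeal X)
    (hY : HasStrongDiameterTwoProperty Y) :
    HasStrongDiameterTwoProperty X :=
  superIdeal_strongDiameterTwoProperty_general Y X hX hY
end

section
/- Let X be a closed subspace of a Banach space Y such that X is a super-ideal in Y. If Y has the local diameter 2 property (every slice of the closed unit ball B_Y has diameter 2), then X has the local diameter 2 property. -/
universe u v

open Metric Set

/-! A super-ideal lets us pull finite configurations of `Y` into `X` almost isometrically.
Given `f ∈ X*` of norm one, take a weak* cluster point `g ∈ Y*` of Hahn–Banach extensions of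
`f ∘ T`, where `T` runs through the almost isometries from finite-dimensional subspaces of `Y`
into `X` fixing `X`. Then `g` extends `f` with `‖g‖ = 1`, and any two points `y₁, y₂` of `Y` are
sent by one such `T` to points of `X` whose `f`-values are close to `g y₁, g y₂`. Two almost
antipodal points of a thin slice of `B_Y` defined by `g` therefore yield, after rescaling, two
almost antipodal points of the given slice of `B_X` defined by `f`. -/

open Filter Topology Submodule

theorem le_of_eventually_le_one_add_pow_mul {a b : ℝ} (n : ℕ)
    (h : ∀ᶠ η in 𝓝[>] (0 : ℝ), a ≤ (1 + η) ^ n * b) : a ≤ b := by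
  have hc : Continuous fun η : ℝ => (1 + η) ^ n * b := by fun_prop
  exact ge_of_tendsto (by simpa using (hc.tendsto 0).mono_left nhdsWithin_le_nhds) h

section Extension

variable {Y : Type*} [NormedAddCommGroup Y] [NormedSpace ℝ Y] {X : Subspace ℝ Y}

/-- What `T : span s → X` from the super-ideal property provides: `h` is a Hahn–Banach extension
of `f ∘ T`. -/
def IsLocalExtension (f : X →L[ℝ] ℝ) (η : ℝ) (s : Set Y) (h : Y →L[ℝ] ℝ) : Prop :=
  ‖h‖ ≤ (1 + η) * ‖f‖ ∧ (∀ x : X, (x : Y) ∈ s → h x = f x) ∧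
    ∀ y₁ ∈ s, ∀ y₂ ∈ s, ∃ x₁ x₂ : X, ‖x₁‖ ≤ (1 + η) * ‖y₁‖ ∧ ‖x₂‖ ≤ (1 + η) * ‖y₂‖ ∧
      ‖y₁ - y₂‖ ≤ (1 + η) * ‖x₁ - x₂‖ ∧ f x₁ = h y₁ ∧ f x₂ = h y₂

def IsAlmostIsometricExtension (f : X →L[ℝ] ℝ) (g : Y →L[ℝ] ℝ) : Prop :=
  (∀ x : X, g x = f x) ∧ ∀ θ > 0, ∀ η > 0, ∀ y₁ y₂ : Y, ∃ x₁ x₂ : X,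
    ‖x₁‖ ≤ (1 + η) * ‖y₁‖ ∧ ‖x₂‖ ≤ (1 + η) * ‖y₂‖ ∧ ‖y₁ - y₂‖ ≤ (1 + η) * ‖x₁ - x₂‖ ∧
      |f x₁ - g y₁| < θ ∧ |f x₂ - g y₂| < θ

theorem IsLocalExtension.mono {f : X →L[ℝ] ℝ} {η η' : ℝ} {s t : Set Y} {h : Y →L[ℝ] ℝ}
    (hh : IsLocalExtension f η s h) (hη : η ≤ η') (hts : t ⊆ s) :
    IsLocalExtension f η' t h := by
  obtain ⟨hnorm, hext, happrox⟩ := hh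
  have hle : ∀ {r : ℝ}, 0 ≤ r → (1 + η) * r ≤ (1 + η') * r := fun hr => by gcongr
  refine ⟨hnorm.trans (hle (norm_nonneg f)), fun x hx => hext x (hts hx), ?_⟩
  intro y₁ hy₁ y₂ hy₂
  obtain ⟨x₁, x₂, h₁, h₂, h₁₂, hf₁, hf₂⟩ := happrox y₁ (hts hy₁) y₂ (hts hy₂)
  exact ⟨x₁, x₂, h₁.trans (hle (norm_nonneg _)), h₂.trans (hle (norm_nonneg _)),
    h₁₂.trans (hle (norm_nonneg _)), hf₁, hf₂⟩

theorem IsSuperIdeal.exists_isLocalExtension (hX : IsSuperIdeal X) (f : X →L[ℝ] ℝ) {η : ℝ}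
    (hη : 0 < η) {s : Set Y} (hs : s.Finite) : ∃ h : Y →L[ℝ] ℝ, IsLocalExtension f η s h := by
  have hE : FiniteDimensional ℝ (span ℝ s) := FiniteDimensional.span_of_finite ℝ hs
  obtain ⟨T, hTX, hTnorm⟩ := hX η hη (span ℝ s) hE
  let φ : span ℝ s →L[ℝ] ℝ := LinearMap.toContinuousLinearMap (f.toLinearMap ∘ₗ T)
  have hφ : ‖φ‖ ≤ (1 + η) * ‖f‖ := φ.opNorm_le_bound (by positivity) fun e => calc
    ‖f (T e)‖ ≤ ‖f‖ * ‖T e‖ := f.le_opNorm _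
    _ ≤ ‖f‖ * ((1 + η) * ‖e‖) := by gcongr; exact (hTnorm e).2
    _ = (1 + η) * ‖f‖ * ‖e‖ := by ring
  obtain ⟨h, hhφ, hhnorm⟩ := exists_extension_norm_eq (span ℝ s) φ
  refine ⟨h, hhnorm ▸ hφ, fun x hx => ?_, fun y₁ hy₁ y₂ hy₂ => ?_⟩
  · let e : span ℝ s := ⟨x, subset_span hx⟩
    exact (hhφ e).trans (congrArg f (Subtype.ext (hTX e x.2)))
  · let e₁ : span ℝ s := ⟨y₁, subset_span hy₁⟩
    let e₂ : span ℝ s := ⟨y₂, subset_span hy₂⟩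
    refine ⟨T e₁, T e₂, (hTnorm e₁).2, (hTnorm e₂).2, ?_, (hhφ e₁).symm, (hhφ e₂).symm⟩
    have h₁₂ := (hTnorm (e₁ - e₂)).1
    rwa [map_sub, inv_mul_le_iff₀ (by positivity)] at h₁₂

theorem IsSuperIdeal.exists_eventually_isLocalExtension (hX : IsSuperIdeal X)
    (f : X →L[ℝ] ℝ) : ∃ h : Finset Y × ℕ → Y →L[ℝ] ℝ,
      ∀ η > 0, ∀ s : Set Y, s.Finite → ∀ᶠ i in atTop, IsLocalExtension f η s (h i) := by
  choose h hh using fun i : Finset Y × ℕ =>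
    hX.exists_isLocalExtension f (Nat.one_div_pos_of_nat (n := i.2)) i.1.finite_toSet
  refine ⟨h, fun η hη s hs => ?_⟩
  obtain ⟨N, hN⟩ := exists_nat_one_div_lt hη
  filter_upwards [eventually_ge_atTop (hs.toFinset, N)] with i hi
  refine (hh i).mono ?_ (hs.toFinset_subset.mp hi.1)
  calc 1 / ((i.2 : ℝ) + 1) ≤ 1 / ((N : ℝ) + 1) := by gcongr; exact_mod_cast hi.2
    _ ≤ η := hN.le

theorem norm_le_of_extends {f : X →L[ℝ] ℝ} {g : Y →L[ℝ] ℝ} (hext : ∀ x : X, g x = f x) :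
    ‖f‖ ≤ ‖g‖ :=
  f.opNorm_le_bound (norm_nonneg g) fun x => hext x ▸ g.le_opNorm x

theorem exists_isAlmostIsometricExtension_of_eventually_isLocalExtension {ι : Type*}
    {l : Filter ι} [l.NeBot] {f : X →L[ℝ] ℝ} {h : ι → Y →L[ℝ] ℝ}
    (hh : ∀ η > 0, ∀ s : Set Y, s.Finite → ∀ᶠ i in l, IsLocalExtension f η s (h i)) :
    ∃ g : Y →L[ℝ] ℝ, ‖g‖ = ‖f‖ ∧ IsAlmostIsometricExtension f g := by
  let u : ι → WeakDual ℝ Y := fun i => StrongDual.toWeakDual (h i)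
  have hball : ∀ η > 0,
      ∀ᶠ i in l, u i ∈ WeakDual.toStrongDual ⁻¹' closedBall 0 ((1 + η) * ‖f‖) :=
    fun η hη => (hh η hη ∅ finite_empty).mono fun i hi => mem_closedBall_zero_iff.mpr hi.1
  obtain ⟨g, -, hg⟩ := IsCompact.exists_mapClusterPt_of_frequently
    (WeakDual.isCompact_closedBall (0 : Y →L[ℝ] ℝ) _) (hball 1 one_pos).frequently
  have hext : ∀ x : X, g x = f x := fun x =>
    (isClosed_eq (WeakDual.eval_continuous (x : Y)) continuous_const).mem_of_mapClusterPt hg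
      ((hh 1 one_pos {(x : Y)} (finite_singleton _)).mono fun i hi => hi.2.1 x rfl)
  have hle : ‖WeakDual.toStrongDual g‖ ≤ ‖f‖ := by
    refine le_of_eventually_le_one_add_pow_mul 1 (eventually_nhdsWithin_of_forall fun η hη => ?_)
    simpa using (WeakDual.isClosed_closedBall 0 _).mem_of_mapClusterPt hg (hball η hη)
  refine ⟨WeakDual.toStrongDual g, ?_, hext, fun θ hθ η hη y₁ y₂ => ?_⟩
  · exact le_antisymm hle (norm_le_of_extends hext)
  have hnear : ∀ y : Y, ∀ᶠ φ in 𝓝 g, |φ y - g y| < θ := fun y => by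
    simpa [Real.dist_eq] using Metric.tendsto_nhds.mp ((WeakDual.eval_continuous y).tendsto g) θ hθ
  obtain ⟨i, ⟨hi₁, hi₂⟩, -, -, hloc⟩ := (hg.frequently ((hnear y₁).and (hnear y₂))).and_eventually
    (hh η hη {y₁, y₂} (by simp)) |>.exists
  obtain ⟨x₁, x₂, h₁, h₂, h₁₂, hf₁, hf₂⟩ := hloc y₁ (by simp) y₂ (by simp)
  exact ⟨x₁, x₂, h₁, h₂, h₁₂, hf₁ ▸ hi₁, hf₂ ▸ hi₂⟩

theorem IsSuperIdeal.exists_isAlmostIsometricExtension (hX : IsSuperIdeal X) (f : X →L[ℝ] ℝ) :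
    ∃ g : Y →L[ℝ] ℝ, ‖g‖ = ‖f‖ ∧ IsAlmostIsometricExtension f g := by
  classical
  obtain ⟨_, hh⟩ := hX.exists_eventually_isLocalExtension f
  exact exists_isAlmostIsometricExtension_of_eventually_isLocalExtension hh

end Extension

section Slice

variable {Z : Type*} [NormedAddCommGroup Z] [NormedSpace ℝ Z]

def unitBallSlice (f : Z →L[ℝ] ℝ) (ε : ℝ) : Set Z :=
  {z | z ∈ closedBall (0 : Z) 1 ∧ 1 - ε < f z}

theorem isSlice_unitBallSlice {f : Z →L[ℝ] ℝ} {ε : ℝ} (hf : ‖f‖ = 1) (hε : 0 < ε) :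
    IsSlice Z (unitBallSlice f ε) :=
  ⟨f, ε, hf, hε, rfl⟩

theorem unitBallSlice_subset_closedBall (f : Z →L[ℝ] ℝ) (ε : ℝ) :
    unitBallSlice f ε ⊆ closedBall 0 1 :=
  fun _ hz => hz.1

theorem isBounded_unitBallSlice (f : Z →L[ℝ] ℝ) (ε : ℝ) :
    Bornology.IsBounded (unitBallSlice f ε) :=
  isBounded_closedBall.subset (unitBallSlice_subset_closedBall f ε)

theorem diam_unitBallSlice_le_two (f : Z →L[ℝ] ℝ) (ε : ℝ) : diam (unitBallSlice f ε) ≤ 2 :=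
  (diam_mono (unitBallSlice_subset_closedBall f ε) isBounded_closedBall).trans
    ((diam_closedBall zero_le_one).trans_eq (mul_one 2))

theorem inv_one_add_smul_mem_unitBallSlice {f : Z →L[ℝ] ℝ} {ε η : ℝ} {z : Z} (hη : 0 ≤ η)
    (hηε : η ≤ ε / 2) (hz : ‖z‖ ≤ 1 + η) (hfz : 1 - ε / 2 < f z) :
    (1 + η)⁻¹ • z ∈ unitBallSlice f ε := by
  have hpos : 0 < 1 + η := by linarith
  refine ⟨?_, ?_⟩
  · rw [mem_closedBall_zero_iff, norm_smul, Real.norm_of_nonneg (inv_nonneg.mpr hpos.le),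
      inv_mul_le_iff₀ hpos, mul_one]
    exact hz
  · rw [map_smul, smul_eq_mul, lt_inv_mul_iff₀ hpos]
    nlinarith

end Slice

theorem IsAlmostIsometricExtension.diam_unitBallSlice_le {Y : Type*} [NormedAddCommGroup Y]
    [NormedSpace ℝ Y] {X : Subspace ℝ Y} {f : X →L[ℝ] ℝ} {g : Y →L[ℝ] ℝ}
    (hfg : IsAlmostIsometricExtension f g) {ε η : ℝ} (hη : 0 < η) (hηε : η ≤ ε / 2) :
    diam (unitBallSlice g (ε / 4)) ≤ (1 + η) ^ 2 * diam (unitBallSlice f ε) := by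
  have hmem : ∀ {x : X} {y : Y}, y ∈ unitBallSlice g (ε / 4) → ‖x‖ ≤ (1 + η) * ‖y‖ →
      |f x - g y| < ε / 4 → (1 + η)⁻¹ • x ∈ unitBallSlice f ε := fun hy hxy hfxy => by
    have hy₁ := mem_closedBall_zero_iff.mp hy.1
    refine inv_one_add_smul_mem_unitBallSlice hη.le hηε (hxy.trans (by nlinarith)) ?_
    linarith [hy.2, (abs_lt.mp hfxy).1]
  refine diam_le_of_forall_dist_le (by positivity) fun y₁ hy₁ y₂ hy₂ => ?_
  obtain ⟨x₁, x₂, h₁, h₂, h₁₂, hf₁, hf₂⟩ := hfg.2 (ε / 4) (by linarith) η hη y₁ y₂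
  calc dist y₁ y₂ = ‖y₁ - y₂‖ := dist_eq_norm y₁ y₂
    _ ≤ (1 + η) * ‖x₁ - x₂‖ := h₁₂
    _ = (1 + η) ^ 2 * dist ((1 + η)⁻¹ • x₁) ((1 + η)⁻¹ • x₂) := by
      rw [dist_eq_norm, ← smul_sub, norm_smul, Real.norm_of_nonneg (by positivity)]
      field_simp
    _ ≤ (1 + η) ^ 2 * diam (unitBallSlice f ε) := by
      gcongr
      exact dist_le_diam_of_mem (isBounded_unitBallSlice f ε) (hmem hy₁ h₁ hf₁) (hmem hy₂ h₂ hf₂)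

theorem superIdeal_localDiameterTwoProperty_general
    (Y : Type*) [NormedAddCommGroup Y] [NormedSpace ℝ Y]
    (X : Subspace ℝ Y) (hX : IsSuperIdeal X)
    (hY : HasLocalDiameterTwoProperty Y) :
    HasLocalDiameterTwoProperty X := by
  rintro _ ⟨f, ε, hf, hε, rfl⟩
  obtain ⟨g, hg, hfg⟩ := hX.exists_isAlmostIsometricExtension f
  have hdiam : diam (unitBallSlice g (ε / 4)) = 2 :=
    hY _ (isSlice_unitBallSlice (hg.trans hf) (by positivity))
  refine le_antisymm (diam_unitBallSlice_le_two f ε) (le_of_eventually_le_one_add_pow_mul 2 ?_)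
  filter_upwards [Ioo_mem_nhdsGT (half_pos hε)] with η hη
  exact hdiam ▸ hfg.diam_unitBallSlice_le hη.1 hη.2.le

theorem superIdeal_localDiameterTwoProperty
    (Y : Type*) [NormedAddCommGroup Y] [NormedSpace ℝ Y] [CompleteSpace Y]
    (X : Subspace ℝ Y) (hXc : IsClosed (X : Set Y)) (hX : IsSuperIdeal X)
    (hY : HasLocalDiameterTwoProperty Y) :
    HasLocalDiameterTwoProperty X :=
  superIdeal_localDiameterTwoProperty_general Y X hX hY
end

section
/- Let Y be an infinite-dimensional Banach space. If every infinite-dimensional separable closed subspace X of Y that is an ideal in Y has the diameter 2 property, then Y has the diameter 2 property. -/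
universe u v

open Metric Set

/-!
If `y₀` lies in a relatively weakly open subset `U` of `B_Y` and in a subspace `X`, then the
trace of `U` on `X` is relatively weakly open in `B_X` (the inclusion is weak-to-weak continuous)
and sits isometrically inside `U`. So it suffices to put `y₀` into an infinite-dimensional
separable closed ideal, which is the Sims–Yost construction. For a finite-dimensional parameter
space, the functions `p ↦ ‖L p‖` on its unit ball form a separable subset of `C(B, ℝ)`, so
countably many families `w` realise every norm profile `‖f + ∑ tⱼ yⱼ‖` up to `η`. Closing a
countable set under this choice gives a countable `G` whose span `D` satisfies the ideal condition
with `T` the identity on `E ∩ D`; a small perturbation moving `E ∩ closure D` into `D` carries it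
over to the closure of `D`.
-/

theorem Set.Countable.exists_superset_closed_under {α : Type*} {S₀ : Set α}
    (hS₀ : S₀.Countable) (Φ : Finset α → Set α) (hΦ : ∀ s, (Φ s).Countable) :
    ∃ G : Set α, G.Countable ∧ S₀ ⊆ G ∧ ∀ s : Finset α, ↑s ⊆ G → Φ s ⊆ G := by
  let step : Set α → Set α := fun A => A ∪ ⋃ s ∈ {s : Finset α | ↑s ⊆ A}, Φ s
  have step_countable {A : Set α} (hA : A.Countable) : (step A).Countable := by
    have hfin : {s : Finset α | ↑s ⊆ A}.Countable := by
      refine ((countable_ofPred_finite_subset hA).preimage Finset.coe_injective).mono ?_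
      exact fun s hs => ⟨s.finite_toSet, hs⟩
    exact hA.union (hfin.biUnion fun s _ => hΦ s)
  have step_mono : Monotone fun n => step^[n] S₀ := monotone_nat_of_le_succ fun n => by
    rw [Function.iterate_succ_apply']
    exact subset_union_left
  refine ⟨⋃ n, step^[n] S₀, countable_iUnion fun n => ?_, subset_iUnion (fun n => step^[n] S₀) 0,
    fun s hs => ?_⟩
  · induction n with
    | zero => exact hS₀
    | succ n ih => rw [Function.iterate_succ_apply']; exact step_countable ih
  · obtain ⟨n, hn⟩ := step_mono.directed_le.exists_mem_subset_of_finset_subset_biUnion hs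
    refine Subset.trans ?_ (subset_iUnion _ (n + 1))
    rw [Function.iterate_succ_apply']
    exact subset_union_of_subset_right (subset_biUnion_of_mem (u := Φ) hn) _

theorem exists_linearIndependent_nat {K V : Type*} [DivisionRing K] [AddCommGroup V] [Module K V]
    (hV : ¬ FiniteDimensional K V) : ∃ u : ℕ → V, LinearIndependent K u := by
  let b := Module.Basis.ofVectorSpace K V
  have : Infinite (Module.Basis.ofVectorSpaceIndex K V) := by
    by_contra hfin
    have := not_infinite_iff_finite.1 hfin
    exact hV (Module.Finite.of_basis b)
  let ι := Infinite.natEmbedding (Module.Basis.ofVectorSpaceIndex K V)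
  exact ⟨b ∘ ι, b.linearIndependent.comp ι ι.injective⟩

theorem Submodule.not_finiteDimensional_of_linearIndependent {K V : Type*} [DivisionRing K]
    [AddCommGroup V] [Module K V] {u : ℕ → V} (hu : LinearIndependent K u) {X : Submodule K V}
    (huX : ∀ n, u n ∈ X) : ¬ FiniteDimensional K X := fun _ =>
  have : Finite ℕ := LinearIndependent.finite_of_isNoetherian (v := fun n => (⟨u n, huX n⟩ : X))
    (LinearIndependent.of_comp X.subtype hu)
  not_finite ℕ

section NormedSpace

variable {P Y : Type*} [NormedAddCommGroup P] [NormedSpace ℝ P]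
  [NormedAddCommGroup Y] [NormedSpace ℝ Y]

open Submodule

theorem LinearMap.norm_le_add_mul_norm_of_closedBall {Z : Type*} [NormedAddCommGroup Z]
    [NormedSpace ℝ Z] {A : P →ₗ[ℝ] Y} {B : P →ₗ[ℝ] Z} {η : ℝ}
    (h : ∀ p ∈ closedBall (0 : P) 1, ‖A p‖ ≤ ‖B p‖ + η) (p : P) :
    ‖A p‖ ≤ ‖B p‖ + η * ‖p‖ := by
  rcases eq_or_ne p 0 with rfl | hp
  · simp
  have hr : 0 < ‖p‖ := norm_pos_iff.2 hp
  have hq : ‖p‖⁻¹ • p ∈ closedBall (0 : P) 1 := by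
    rw [mem_closedBall_zero_iff, norm_smul, norm_inv, norm_norm, inv_mul_cancel₀ hr.ne']
  have := mul_le_mul_of_nonneg_left (h _ hq) hr.le
  rw [map_smul, map_smul, norm_smul, norm_smul, norm_inv, norm_norm, ← mul_assoc, mul_add,
    ← mul_assoc, mul_inv_cancel₀ hr.ne', one_mul, one_mul] at this
  linarith [mul_comm η ‖p‖]

theorem exists_countable_norm_approx [FiniteDimensional ℝ P] {ι : Type*} (L : ι → P →ₗ[ℝ] Y) :
    ∃ J : Set ι, J.Countable ∧
      ∀ i, ∀ η > 0, ∃ j ∈ J, ∀ p, ‖L j p‖ ≤ ‖L i p‖ + η * ‖p‖ := by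
  let K := closedBall (0 : P) 1
  have : CompactSpace K := isCompact_iff_compactSpace.1 (isCompact_closedBall 0 1)
  let Φ : ι → C(K, ℝ) := fun i =>
    ⟨fun p => ‖L i p‖, ((L i).continuous_of_finiteDimensional.comp continuous_subtype_val).norm⟩
  obtain ⟨T, hTΦ, hTc, hΦT⟩ :=
    (TopologicalSpace.IsSeparable.of_separableSpace (range Φ)).exists_countable_dense_subset
  choose j hj using fun c : T => hTΦ c.2
  have := hTc.to_subtype
  refine ⟨range j, countable_range j, fun i η hη => ?_⟩
  obtain ⟨c, hcT, hc⟩ := Metric.mem_closure_iff.1 (hΦT (mem_range_self i)) η hη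
  refine ⟨j ⟨c, hcT⟩, mem_range_self _, LinearMap.norm_le_add_mul_norm_of_closedBall fun p hp => ?_⟩
  have hdist : dist (Φ (j ⟨c, hcT⟩) ⟨p, hp⟩) (Φ i ⟨p, hp⟩) ≤ η :=
    (ContinuousMap.dist_apply_le_dist _).trans (by rw [hj, dist_comm]; exact hc.le)
  exact le_add_of_sub_left_le ((le_abs_self _).trans hdist)

def Submodule.subtypeCoprod (F : Submodule ℝ Y) {m : ℕ} (y : Fin m → Y) :
    F × (Fin m → ℝ) →ₗ[ℝ] Y :=
  F.subtype.coprod (Fintype.linearCombination ℝ y)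

theorem Submodule.subtypeCoprod_apply (F : Submodule ℝ Y) {m : ℕ} (y : Fin m → Y)
    (p : F × (Fin m → ℝ)) : F.subtypeCoprod y p = p.1 + ∑ j, p.2 j • y j := by
  simp [subtypeCoprod, Fintype.linearCombination_apply]

def AbsorbsFiniteExtensions (G : Set Y) : Prop :=
  ∀ s : Finset Y, ↑s ⊆ G → ∀ (m : ℕ) (y : Fin m → Y), ∀ η > 0, ∃ w : Fin m → Y, range w ⊆ G ∧
    ∀ p, ‖(span ℝ (s : Set Y)).subtypeCoprod w p‖ ≤
      ‖(span ℝ (s : Set Y)).subtypeCoprod y p‖ + η * ‖p‖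

theorem Set.Countable.exists_superset_absorbsFiniteExtensions {S₀ : Set Y}
    (hS₀ : S₀.Countable) : ∃ G : Set Y, G.Countable ∧ S₀ ⊆ G ∧ AbsorbsFiniteExtensions G := by
  choose J hJc hJ using fun (s : Finset Y) (m : ℕ) =>
    exists_countable_norm_approx fun y : Fin m → Y => (span ℝ (s : Set Y)).subtypeCoprod y
  obtain ⟨G, hGc, hSG, hG⟩ := hS₀.exists_superset_closed_under
    (fun s => ⋃ m, ⋃ w ∈ J s m, range w)
    (fun s => countable_iUnion fun m => (hJc s m).biUnion fun w _ => (finite_range w).countable)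
  refine ⟨G, hGc, hSG, fun s hs m y η hη => ?_⟩
  obtain ⟨w, hw, hwy⟩ := hJ s m y η hη
  exact ⟨w, (subset_iUnion₂ (s := fun w _ => range w) w hw).trans
    ((subset_iUnion (fun m => ⋃ w ∈ J s m, range w) m).trans (hG s hs)), hwy⟩

theorem Submodule.exists_subtypeCoprod_section (F E : Submodule ℝ Y) [FiniteDimensional ℝ F]
    [FiniteDimensional ℝ E] : ∃ (m : ℕ) (y : Fin m → Y) (σ : E →ₗ[ℝ] F × (Fin m → ℝ)),
      (∀ e, F.subtypeCoprod y (σ e) = e) ∧ ∀ e : E, (e : Y) ∈ F → (σ e).2 = 0 := by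
  obtain ⟨Q, hQ⟩ := ClosedComplemented.of_finiteDimensional F
  obtain ⟨R, hR⟩ : ∃ R : Y →ₗ[ℝ] Y, ∀ y, R y = y - Q y :=
    ⟨LinearMap.id - F.subtype ∘ₗ (Q : Y →ₗ[ℝ] F), fun _ => rfl⟩
  let b := Module.finBasis ℝ (E.map R)
  refine ⟨_, fun j => b j,
    ((Q : Y →ₗ[ℝ] F) ∘ₗ E.subtype).prod (b.equivFun.toLinearMap ∘ₗ R.submoduleMap E),
    fun e => ?_, fun e he => ?_⟩
  · have hb := congrArg Subtype.val (b.sum_equivFun (R.submoduleMap E e))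
    simp only [coe_sum, coe_smul, Module.Basis.equivFun_apply] at hb
    simp [subtypeCoprod_apply, hb, hR]
  · have hRe : R.submoduleMap E e = 0 := by
      ext
      simpa [hR, sub_eq_zero] using (congrArg Subtype.val (hQ ⟨e, he⟩)).symm
    simp [hRe]

theorem AbsorbsFiniteExtensions.isIdeal_span {G : Set Y} (hG : AbsorbsFiniteExtensions G) :
    IsIdeal (span ℝ G) := by
  intro ε hε E hE
  obtain ⟨s, hsG, hEs⟩ : ∃ s : Finset Y, ↑s ⊆ G ∧ E ⊓ span ℝ G ≤ span ℝ ↑s := by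
    obtain ⟨t, ht⟩ := (fg_iff_finiteDimensional (E ⊓ span ℝ G)).2 inferInstance
    obtain ⟨s, hsG, hts⟩ := subset_span_finite_of_subset_span fun x hx =>
      (ht ▸ subset_span hx : x ∈ E ⊓ span ℝ G).2
    exact ⟨s, hsG, ht ▸ span_le.2 hts⟩
  let F := span ℝ (s : Set Y)
  obtain ⟨m, y, σ, hσ, hσF⟩ := F.exists_subtypeCoprod_section E
  let C := ‖LinearMap.toContinuousLinearMap σ‖
  obtain ⟨w, hwG, hw⟩ := hG s hsG m y (ε / (C + 1)) (by positivity)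
  have hrange (p : F × (Fin m → ℝ)) : F.subtypeCoprod w p ∈ span ℝ G := by
    rw [subtypeCoprod_apply]
    exact add_mem (span_mono hsG p.1.2)
      (sum_mem fun j _ => smul_mem _ _ (subset_span (hwG (mem_range_self j))))
  refine ⟨(F.subtypeCoprod w ∘ₗ σ).codRestrict _ fun e => hrange _, fun e he => ?_, fun e => ?_⟩
  · simpa [subtypeCoprod_apply, hσF e (hEs ⟨e.2, he⟩)] using hσ e
  · have hCε : ε / (C + 1) * C ≤ ε := by
      rw [div_mul_eq_mul_div, div_le_iff₀ (by positivity)]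
      nlinarith
    calc ‖F.subtypeCoprod w (σ e)‖
        ≤ ‖F.subtypeCoprod y (σ e)‖ + ε / (C + 1) * ‖σ e‖ := hw _
      _ ≤ ‖e‖ + ε / (C + 1) * (C * ‖e‖) := by
          rw [hσ e, coe_norm]
          gcongr
          exact (LinearMap.toContinuousLinearMap σ).le_opNorm e
      _ ≤ (1 + ε) * ‖e‖ := by nlinarith [norm_nonneg e]

theorem Submodule.exists_small_perturbation_mem (D E₀ : Submodule ℝ Y) [FiniteDimensional ℝ E₀]
    (hE₀ : E₀ ≤ D.topologicalClosure) {δ : ℝ} (hδ : 0 < δ) :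
    ∃ R : Y →L[ℝ] Y, ‖R‖ < δ ∧ (∀ y, R y ∈ D.topologicalClosure) ∧ ∀ u ∈ E₀, u + R u ∈ D := by
  obtain ⟨Q, hQ⟩ := ClosedComplemented.of_finiteDimensional E₀
  let b := Module.finBasis ℝ E₀
  let φ : Fin _ → Y →L[ℝ] ℝ := fun i => LinearMap.toContinuousLinearMap (b.coord i) ∘L Q
  let Ψ : (Fin _ → Y) → Y →L[ℝ] Y := fun x => ∑ i, (φ i).smulRight (x i - b i)
  have hΨ : Continuous Ψ := by fun_prop
  have hb : (fun i => (b i : Y)) ∈ closure (univ.pi fun _ => (D : Set Y)) := by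
    rw [closure_pi_set]
    exact fun i _ => hE₀ (b i).2
  obtain ⟨x, hxΨ, hxD⟩ := _root_.mem_closure_iff.1 hb {x | ‖Ψ x‖ < δ}
    (isOpen_lt (continuous_norm.comp hΨ) continuous_const) (by simpa [Ψ])
  refine ⟨Ψ x, hxΨ, fun y => ?_, fun u hu => ?_⟩
  · simp only [Ψ, sum_apply, ContinuousLinearMap.smulRight_apply]
    exact sum_mem fun i _ =>
      smul_mem _ _ (sub_mem (D.le_topologicalClosure (hxD i trivial)) (hE₀ (b i).2))
  · have hφ : ∀ i, φ i u = b.repr ⟨u, hu⟩ i := fun i => by simp [φ, hQ ⟨u, hu⟩]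
    have hsum := congrArg Subtype.val (b.sum_repr ⟨u, hu⟩)
    simp only [coe_sum, coe_smul] at hsum
    have : u + Ψ x u = ∑ i, φ i u • x i := by
      simp only [Ψ, sum_apply, ContinuousLinearMap.smulRight_apply,
        smul_sub, Finset.sum_sub_distrib, hφ, hsum]
      abel
    rw [this]
    exact sum_mem fun i _ => smul_mem _ _ (hxD i trivial)

theorem IsIdeal.topologicalClosure {D : Submodule ℝ Y} (hD : IsIdeal D) :
    IsIdeal D.topologicalClosure := by
  intro ε hε E hE
  let δ := ε / (4 + ε)
  obtain ⟨R, hRδ, hRX, hRD⟩ := D.exists_small_perturbation_mem (E ⊓ D.topologicalClosure)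
    inf_le_right (δ := δ) (by positivity)
  let Θ := (LinearMap.id + (R : Y →ₗ[ℝ] Y)).submoduleMap E
  obtain ⟨T, hTD, hT⟩ := hD (ε / 2) (half_pos hε) (E.map (LinearMap.id + (R : Y →ₗ[ℝ] Y)))
    inferInstance
  refine ⟨(D.subtype ∘ₗ T ∘ₗ Θ - (R : Y →ₗ[ℝ] Y) ∘ₗ E.subtype).codRestrict _
    (fun e => sub_mem (D.le_topologicalClosure (T _).2) (hRX e)), fun e he => ?_, fun e => ?_⟩
  · have : (T (Θ e) : Y) = e + R e := hTD (Θ e) (hRD e ⟨e.2, he⟩)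
    simp [this]
  · show ‖(T (Θ e) : Y) - R e‖ ≤ (1 + ε) * ‖(e : Y)‖
    have hRe : ‖R e‖ ≤ δ * ‖(e : Y)‖ := (R.le_opNorm e).trans (by gcongr)
    have hΘ : ‖Θ e‖ ≤ (1 + δ) * ‖(e : Y)‖ :=
      show ‖(e : Y) + R e‖ ≤ _ from (norm_add_le _ _).trans (by linarith)
    have hδε : (1 + ε / 2) * (1 + δ) + δ = 1 + ε := by
      simp only [δ]
      field_simp
      ring
    calc ‖(T (Θ e) : Y) - R e‖ ≤ ‖T (Θ e)‖ + ‖R e‖ := norm_sub_le _ _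
      _ ≤ (1 + ε / 2) * ((1 + δ) * ‖(e : Y)‖) + δ * ‖(e : Y)‖ := by
          gcongr
          exact (hT _).trans (by gcongr)
      _ = (1 + ε) * ‖(e : Y)‖ := by rw [← hδε]; ring

theorem Set.Countable.exists_separable_ideal_superset {S₀ : Set Y} (hS₀ : S₀.Countable) :
    ∃ X : Subspace ℝ Y, IsClosed (X : Set Y) ∧ TopologicalSpace.SeparableSpace X ∧
      S₀ ⊆ X ∧ IsIdeal X := by
  obtain ⟨G, hGc, hSG, hG⟩ := hS₀.exists_superset_absorbsFiniteExtensions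
  refine ⟨(span ℝ G).topologicalClosure, (span ℝ G).isClosed_topologicalClosure, ?_,
    hSG.trans (subset_span.trans (span ℝ G).le_topologicalClosure),
    hG.isIdeal_span.topologicalClosure⟩
  have : TopologicalSpace.IsSeparable ((span ℝ G).topologicalClosure : Set Y) := by
    rw [topologicalClosure_coe]
    exact hGc.isSeparable.span.closure
  exact this.separableSpace

theorem HasDiameterTwoProperty.two_le_diam_of_subspace {X : Subspace ℝ Y}
    (hX : HasDiameterTwoProperty X) {V : Set Y} (hV : @IsOpen (WeakSpace ℝ Y) _ V) {y : Y}
    (hyX : y ∈ X) (hy : y ∈ V ∩ closedBall 0 1) :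
    2 ≤ diam (V ∩ closedBall (0 : Y) 1) := by
  have hU : diam (((↑) : X → Y) ⁻¹' (V ∩ closedBall 0 1)) = 2 := by
    refine hX _ ⟨⟨y, hyX⟩, hy⟩ ⟨(↑) ⁻¹' V, hV.preimage (WeakSpace.map X.subtypeL).continuous, ?_⟩
    ext x
    simp
  rw [← hU, ← isometry_subtype_coe.diam_image]
  exact diam_mono (image_preimage_subset _ _) (isBounded_closedBall.subset inter_subset_right)

end NormedSpace

theorem diameterTwo_of_separable_ideals_general
    (Y : Type*) [NormedAddCommGroup Y] [NormedSpace ℝ Y]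
    (hY : ¬ FiniteDimensional ℝ Y)
    (h : ∀ X : Subspace ℝ Y, IsClosed (X : Set Y) → ¬ FiniteDimensional ℝ X →
      TopologicalSpace.SeparableSpace X → IsIdeal X → HasDiameterTwoProperty X) :
    HasDiameterTwoProperty Y := by
  rintro U ⟨y, hy⟩ ⟨V, hV, rfl⟩
  obtain ⟨u, hu⟩ := exists_linearIndependent_nat hY
  obtain ⟨X, hXc, hXsep, hSX, hXideal⟩ :=
    ((countable_range u).insert y).exists_separable_ideal_superset
  have hXinf : ¬ FiniteDimensional ℝ X := Submodule.not_finiteDimensional_of_linearIndependent hu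
    fun n => hSX (mem_insert_of_mem _ (mem_range_self n))
  refine le_antisymm ?_
    ((h X hXc hXinf hXsep hXideal).two_le_diam_of_subspace hV (hSX (mem_insert y _)) hy)
  calc diam (V ∩ closedBall 0 1) ≤ diam (closedBall (0 : Y) 1) :=
        diam_mono inter_subset_right isBounded_closedBall
    _ ≤ 2 := by simpa using diam_closedBall (x := (0 : Y)) zero_le_one

theorem diameterTwo_of_separable_ideals
    (Y : Type*) [NormedAddCommGroup Y] [NormedSpace ℝ Y] [CompleteSpace Y]
    (hY : ¬ FiniteDimensional ℝ Y)
    (h : ∀ X : Subspace ℝ Y, IsClosed (X : Set Y) → ¬ FiniteDimensional ℝ X →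
      TopologicalSpace.SeparableSpace X → IsIdeal X → HasDiameterTwoProperty X) :
    HasDiameterTwoProperty Y :=
  diameterTwo_of_separable_ideals_general Y hY h
end

section
/- Let X be a non-trivial Banach space. Then X has the Daugavet property if and only if for every y in the unit sphere S_X, every x* in the unit sphere S_{X*} and every ε > 0 there exists x ∈ S_X such that x*(x) ≥ 1 − ε and ‖x + y‖ ≥ 2 − ε. -/
universe u v

open Metric Set

/-! For a rank-one operator `T = g ⊗ y` with `‖g‖ = ‖y‖ = 1` the vectors with `‖x + g x • y‖` close
to `2 = ‖I + T‖` are, up to sign, exactly the points of the slice `{x | g x > 1 - ε}` of the unit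
sphere that are far from `-y`. A general rank-one operator is a positive multiple of such a `T`,
and equality in the triangle inequality `‖I + T‖ ≤ 1 + ‖T‖` survives positive rescaling of `T`. -/

theorem norm_add_smul_eq_of_norm_add_eq {E : Type*} [SeminormedAddCommGroup E] [NormedSpace ℝ E]
    {a b : E} (h : ‖a + b‖ = ‖a‖ + ‖b‖) {t : ℝ} (ht : 0 ≤ t) :
    ‖a + t • b‖ = ‖a‖ + t * ‖b‖ := by
  have hnorm : ∀ {s : ℝ} (c : E), 0 ≤ s → ‖s • c‖ = s * ‖c‖ := fun c hs => by
    rw [norm_smul, Real.norm_of_nonneg hs]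
  refine le_antisymm ((norm_add_le _ _).trans_eq (by rw [hnorm b ht])) ?_
  rcases le_total t 1 with ht1 | ht1
  · have : ‖a + b‖ ≤ ‖a + t • b‖ + (1 - t) * ‖b‖ := by
      calc ‖a + b‖ = ‖(a + t • b) + (1 - t) • b‖ := by rw [sub_smul, one_smul]; abel_nf
        _ ≤ _ := (norm_add_le _ _).trans_eq (by rw [hnorm b (by linarith)])
    linarith
  · have : t * ‖a + b‖ ≤ ‖a + t • b‖ + (t - 1) * ‖a‖ := by
      calc t * ‖a + b‖ = ‖(a + t • b) + (t - 1) • a‖ := by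
            rw [← hnorm _ ht, smul_add, sub_smul, one_smul]; abel_nf
        _ ≤ _ := (norm_add_le _ _).trans_eq (by rw [hnorm a (by linarith)])
    rw [h, mul_add] at this
    linarith

namespace ContinuousLinearMap

variable {X : Type*} [NormedAddCommGroup X] [NormedSpace ℝ X]

theorem exists_norm_eq_one_lt_apply_of_lt_opNorm {F : Type*} [SeminormedAddCommGroup F]
    [NormedSpace ℝ F] (f : X →L[ℝ] F) {r : ℝ} (hr₀ : 0 ≤ r) (hr : r < ‖f‖) :
    ∃ x : X, ‖x‖ = 1 ∧ r < ‖f x‖ := by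
  lift r to NNReal using hr₀
  obtain ⟨x, hx, hfx⟩ := f.exists_nnnorm_eq_one_lt_apply_of_lt_opNNNorm (r := r) hr
  exact ⟨x, congrArg NNReal.toReal hx, hfx⟩

theorem finrank_range_smulRight {g : X →L[ℝ] ℝ} (hg : g ≠ 0) {y : X} (hy : y ≠ 0) :
    Module.finrank ℝ (LinearMap.range (g.smulRight y : X →ₗ[ℝ] X)) = 1 := by
  rw [range_smulRight_apply hg, finrank_span_singleton hy]

theorem exists_eq_smulRight_of_finrank_range_eq_one {T : X →L[ℝ] X}
    (hT : Module.finrank ℝ (LinearMap.range (T : X →ₗ[ℝ] X)) = 1) :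
    ∃ (g : X →L[ℝ] ℝ) (y : X), ‖y‖ = 1 ∧ T = g.smulRight y := by
  obtain ⟨⟨v, _⟩, hv0, hv⟩ := finrank_eq_one_iff'.mp hT
  have hv0 : v ≠ 0 := fun h => hv0 (Subtype.ext h)
  set y := ‖v‖⁻¹ • v
  have hy : ‖y‖ = 1 := norm_smul_inv_norm hv0
  obtain ⟨f, -, hfy⟩ := exists_dual_vector ℝ y (by simp [hy])
  refine ⟨f.comp T, y, hy, ext fun x => ?_⟩
  obtain ⟨c, hc⟩ := hv ⟨T x, x, rfl⟩
  have hTx : T x = (c * ‖v‖) • y := by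
    rw [mul_smul, smul_inv_smul₀ (norm_ne_zero_iff.mpr hv0)]
    exact (congrArg Subtype.val hc).symm
  rw [smulRight_apply, comp_apply, hTx, map_smul, hfy, hy]
  simp

end ContinuousLinearMap

section Daugavet

variable {X : Type*} [NormedAddCommGroup X] [NormedSpace ℝ X]

open ContinuousLinearMap

theorem exists_norm_eq_one_nonneg_lt_norm_add_smul {y : X} {g : X →L[ℝ] ℝ} {r : ℝ} (hr₀ : 0 ≤ r)
    (hr : r < ‖ContinuousLinearMap.id ℝ X + g.smulRight y‖) :
    ∃ x : X, ‖x‖ = 1 ∧ 0 ≤ g x ∧ r < ‖x + g x • y‖ := by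
  obtain ⟨x, hx, hrx⟩ := exists_norm_eq_one_lt_apply_of_lt_opNorm _ hr₀ hr
  rcases le_total 0 (g x) with hgx | hgx
  · exact ⟨x, hx, hgx, hrx⟩
  · refine ⟨-x, by rwa [norm_neg], by simpa using hgx, ?_⟩
    rwa [map_neg, neg_smul, ← neg_add, norm_neg]

theorem norm_id_add_smulRight_eq_two_iff {y : X} (hy : ‖y‖ = 1) {g : X →L[ℝ] ℝ} (hg : ‖g‖ = 1) :
    ‖ContinuousLinearMap.id ℝ X + g.smulRight y‖ = 2 ↔
      ∀ ε : ℝ, 0 < ε → ∃ x : X, ‖x‖ = 1 ∧ 1 - ε ≤ g x ∧ 2 - ε ≤ ‖x + y‖ := by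
  have apply_le_one {x : X} (hx : ‖x‖ = 1) : g x ≤ 1 :=
    (le_abs_self _).trans (by simpa [hg] using g.unit_le_opNorm x hx.le)
  have norm_add_sub_le {x : X} (hx : ‖x‖ = 1) : |‖x + y‖ - ‖x + g x • y‖| ≤ 1 - g x := by
    have hdiff : (x + y) - (x + g x • y) = (1 - g x) • y := by
      rw [add_sub_add_left_eq_sub, sub_smul, one_smul]
    refine (abs_norm_sub_norm_le _ _).trans_eq ?_
    rw [hdiff, norm_smul, hy, mul_one, Real.norm_of_nonneg (sub_nonneg.mpr (apply_le_one hx))]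
  constructor
  · intro h ε hε
    obtain ⟨x, hx, hgx, hmax⟩ := exists_norm_eq_one_nonneg_lt_norm_add_smul
      (le_max_right (2 - ε / 2) 0) (h ▸ max_lt (by linarith) two_pos)
    have hlt : 2 - ε / 2 < ‖x + g x • y‖ := (le_max_left _ _).trans_lt hmax
    have hle : ‖x + g x • y‖ ≤ 1 + g x := by
      simpa [hx, norm_smul, hy, abs_of_nonneg hgx] using norm_add_le x (g x • y)
    refine ⟨x, hx, by linarith, ?_⟩
    linarith [neg_abs_le (‖x + y‖ - ‖x + g x • y‖), norm_add_sub_le hx]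
  · intro h
    refine le_antisymm ((norm_add_le _ _).trans ?_) (le_of_forall_sub_le fun ε hε => ?_)
    · rw [norm_smulRight_apply, hg, hy]
      linarith [norm_id_le (𝕜 := ℝ) (E := X)]
    obtain ⟨x, hx, hgx, hxy⟩ := h (ε / 2) (half_pos hε)
    have hle : ‖x + g x • y‖ ≤ ‖ContinuousLinearMap.id ℝ X + g.smulRight y‖ :=
      (ContinuousLinearMap.id ℝ X + g.smulRight y).unit_le_opNorm x hx.le
    linarith [le_abs_self (‖x + y‖ - ‖x + g x • y‖), norm_add_sub_le hx]

theorem hasDaugavetProperty_iff_norm_id_add_smulRight_eq_two [Nontrivial X] :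
    HasDaugavetProperty X ↔ ∀ y : X, ‖y‖ = 1 → ∀ g : X →L[ℝ] ℝ, ‖g‖ = 1 →
      ‖ContinuousLinearMap.id ℝ X + g.smulRight y‖ = 2 := by
  constructor
  · intro hD y hy g hg
    have hg0 : g ≠ 0 := norm_ne_zero_iff.mp (by simp [hg])
    have hy0 : y ≠ 0 := norm_ne_zero_iff.mp (by simp [hy])
    rw [hD _ (finrank_range_smulRight hg0 hy0), norm_smulRight_apply, hg, hy]
    norm_num
  · intro H T hT
    obtain ⟨g, y, hy, rfl⟩ := exists_eq_smulRight_of_finrank_range_eq_one hT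
    rw [norm_smulRight_apply, hy, mul_one]
    rcases eq_or_ne g 0 with rfl | hg0
    · simp
    have hg : ‖‖g‖⁻¹ • g‖ = 1 := norm_smul_inv_norm hg0
    have hsmul : g.smulRight y = ‖g‖ • (‖g‖⁻¹ • g).smulRight y := by
      ext x
      rw [smul_apply, smulRight_apply, smulRight_apply, smul_apply, smul_smul, smul_eq_mul,
        mul_inv_cancel_left₀ (norm_ne_zero_iff.mpr hg0)]
    have hD : ‖ContinuousLinearMap.id ℝ X + (‖g‖⁻¹ • g).smulRight y‖ =
        ‖ContinuousLinearMap.id ℝ X‖ + ‖(‖g‖⁻¹ • g).smulRight y‖ := by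
      rw [H y hy _ hg, norm_id, norm_smulRight_apply, hg, hy]
      norm_num
    rw [hsmul, norm_add_smul_eq_of_norm_add_eq hD (norm_nonneg g), norm_id, norm_smulRight_apply,
      hg, hy, mul_one, mul_one]

end Daugavet

theorem daugavet_iff_slice_condition_general
    (X : Type*) [NormedAddCommGroup X] [NormedSpace ℝ X] [Nontrivial X] :
    HasDaugavetProperty X ↔
      ∀ y : X, ‖y‖ = 1 → ∀ g : X →L[ℝ] ℝ, ‖g‖ = 1 → ∀ ε : ℝ, 0 < ε →
        ∃ x : X, ‖x‖ = 1 ∧ 1 - ε ≤ g x ∧ 2 - ε ≤ ‖x + y‖ := by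
  rw [hasDaugavetProperty_iff_norm_id_add_smulRight_eq_two]
  exact forall₂_congr fun _ hy => forall₂_congr fun _ hg => norm_id_add_smulRight_eq_two_iff hy hg

theorem daugavet_iff_slice_condition
    (X : Type*) [NormedAddCommGroup X] [NormedSpace ℝ X] [CompleteSpace X] [Nontrivial X] :
    HasDaugavetProperty X ↔
      ∀ y : X, ‖y‖ = 1 → ∀ g : X →L[ℝ] ℝ, ‖g‖ = 1 → ∀ ε : ℝ, 0 < ε →
        ∃ x : X, ‖x‖ = 1 ∧ 1 - ε ≤ g x ∧ 2 - ε ≤ ‖x + y‖ :=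
  daugavet_iff_slice_condition_general X
end
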